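/- arXiv:1010.4877 — 7 statements merged into one kernel-verified Lean document; each statement's English description precedes it below -/
import Mathlib

section
/- Let n = qk + r with 0 ≤ r < k and q ≥ 1. Then (k+r)·2^q − k < c_0 · k · 2^{n/k}, where c_0 = 2/(2^{1/log 2} · log 2). -/
/-!
Since `b ^ (1 / log b) = e`, the right-hand side `b / (b ^ (1 / log b) * log b) * b ^ x` equals
`exp ((x + 1) * log b - 1) / log b`, so the bound `1 + x ≤ …` is `exp t ≥ 1 + t` at
`t = (x + 1) * log b - 1`: the line `1 + x` is tangent to this exponential. Applied to `x = r / k`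
and multiplied by `k * 2 ^ q`, it gives `(k + r) * 2 ^ q ≤ c₀ * k * 2 ^ (n / k)`, and subtracting
`k > 0` makes the inequality strict.
-/

open Real

lemma one_add_le_div_mul_rpow {b : ℝ} (hb : 1 < b) (x : ℝ) :
    1 + x ≤ b / (b ^ (1 / log b) * log b) * b ^ x := by
  have hb₀ : 0 < b := by linarith
  have hL : 0 < log b := log_pos hb
  have hrhs : b / (b ^ (1 / log b) * log b) * b ^ x = exp ((x + 1) * log b - 1) / log b := by
    rw [one_div, rpow_inv_log hb₀ hb.ne', rpow_def_of_pos hb₀, exp_sub,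
      show (x + 1) * log b = log b * x + log b by ring, exp_add, exp_log hb₀]
    ring
  rw [hrhs, le_div_iff₀ hL]
  linarith [add_one_le_exp ((x + 1) * log b - 1)]

lemma add_mul_rpow_le {b : ℝ} (hb : 1 < b) {k : ℝ} (hk : 0 < k) (q r : ℝ) :
    (k + r) * b ^ q ≤ b / (b ^ (1 / log b) * log b) * k * b ^ ((q * k + r) / k) := by
  have hsplit : b ^ ((q * k + r) / k) = b ^ q * b ^ (r / k) := by
    rw [← rpow_add (by linarith)]
    field_simp
  calc (k + r) * b ^ q = (1 + r / k) * k * b ^ q := by field_simp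
    _ ≤ b / (b ^ (1 / log b) * log b) * b ^ (r / k) * k * b ^ q := by
      gcongr
      exact one_add_le_div_mul_rpow hb _
    _ = _ := by rw [hsplit]; ring

theorem stmt3_general (n q k r : ℕ) (hr : r < k) (hn : n = q * k + r) :
    ((k : ℝ) + r) * 2 ^ q - k
      < (2 / ((2 : ℝ) ^ (1 / Real.log 2) * Real.log 2)) * k
          * (2 : ℝ) ^ ((n : ℝ) / (k : ℝ)) := by
  have hk : (0 : ℝ) < k := by exact_mod_cast (Nat.zero_le r).trans_lt hr
  have hle := add_mul_rpow_le one_lt_two hk q r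
  rw [rpow_natCast] at hle
  rw [hn]
  push_cast
  linarith

/-- (k+r)·2^q − k < c₀·k·2^{n/k} where c₀ = 2/(2^{1/log 2}·log 2). -/
theorem stmt3 (n q k r : ℕ) (hq : 1 ≤ q) (hr : r < k) (hn : n = q * k + r) :
    ((k : ℝ) + r) * 2 ^ q - k
      < (2 / ((2 : ℝ) ^ (1 / Real.log 2) * Real.log 2)) * k
          * (2 : ℝ) ^ ((n : ℝ) / (k : ℝ)) :=
  stmt3_general n q k r hr hn
end

section
/- Let F be a graph on f vertices with vertex set {1,...,f}, let t = (t_1,...,t_f) be a vector of positive integers, and let F⊗t be the blow-up of F obtained by replacing vertex i by an independent set of size t_i and putting complete bipartite graphs between blown-up classes corresponding to edges of F. If the homomorphism density of F in a graph G is p, then the homomorphism density of F⊗t in G is at least p^{t_1 t_2 ··· t_f}. -/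
open Finset
open scoped Classical

namespace Stmt5Aux

lemma prod01 {α : Type*} (s : Finset α) (g : α → ℝ)
    (h : ∀ x ∈ s, g x = 0 ∨ g x = 1) : (∏ x ∈ s, g x) = 0 ∨ (∏ x ∈ s, g x) = 1 := by
  classical
  induction s using Finset.induction with
  | empty => simp
  | @insert a s' hx ih =>
    rw [Finset.prod_insert hx]
    rcases h a (Finset.mem_insert_self a s') with h0 | h1
    · left; rw [h0, zero_mul]
    · rw [h1, one_mul]; exact ih fun x hx => h x (Finset.mem_insert_of_mem hx)

lemma card_filter_val_lt (T k : ℕ) (h : k ≤ T) :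
    ((univ : Finset (Fin T)).filter (fun a => a.1 < k)).card = k := by
  have : (univ : Finset (Fin T)).filter (fun a => a.1 < k)
      = (univ : Finset (Fin k)).map ⟨Fin.castLE h, (Fin.castLE_injective h)⟩ := by
    ext a
    simp only [mem_filter, mem_univ, true_and, mem_map, Function.Embedding.coeFn_mk]
    constructor
    · intro ha; exact ⟨⟨a.1, ha⟩, by ext; simp⟩
    · rintro ⟨b, rfl⟩; exact b.2
  rw [this, Finset.card_map, card_univ, Fintype.card_fin]

section Core
variable {f n T : ℕ} (F : SimpleGraph (Fin f)) (G : SimpleGraph (Fin n))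

noncomputable def A (G : SimpleGraph (Fin n)) (a b : Fin n) : ℝ := if G.Adj a b then 1 else 0

lemma A01 (a b : Fin n) : A G a b = 0 ∨ A G a b = 1 := by
  unfold A; split <;> simp

lemma A_symm (a b : Fin n) : A G a b = A G b a := by
  unfold A; rw [G.adj_comm]

lemma A_eq_one {a b : Fin n} (h : G.Adj a b) : A G a b = 1 := if_pos h

noncomputable def W (T : ℕ) (t : Fin f → ℕ) (y : Fin f → Fin T → Fin n) : ℝ :=
  ∏ i, ∏ j, ∏ a : Fin T, ∏ b : Fin T,
    if F.Adj i j ∧ a.1 < t i ∧ b.1 < t j then A G (y i a) (y j b) else 1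

def HomCond (T : ℕ) (t : Fin f → ℕ) (y : Fin f → Fin T → Fin n) : Prop :=
  ∀ i j (a b : Fin T), F.Adj i j → a.1 < t i → b.1 < t j → G.Adj (y i a) (y j b)

def Hom' (t : Fin f → ℕ) (φ : ∀ j, Fin (t j) → Fin n) : Prop :=
  ∀ i j a b, F.Adj i j → G.Adj (φ i a) (φ j b)

lemma W_eq_indicator (t : Fin f → ℕ) (y : Fin f → Fin T → Fin n) :
    W F G T t y = if HomCond F G T t y then 1 else 0 := by
  by_cases h : HomCond F G T t y
  · rw [if_pos h]
    unfold W
    have : ∀ i j (a b : Fin T),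
        (if F.Adj i j ∧ a.1 < t i ∧ b.1 < t j then A G (y i a) (y j b) else 1) = 1 := by
      intro i j a b
      by_cases hc : F.Adj i j ∧ a.1 < t i ∧ b.1 < t j
      · rw [if_pos hc]; exact A_eq_one G (h i j a b hc.1 hc.2.1 hc.2.2)
      · exact if_neg hc
    simp only [this, Finset.prod_const_one]
  · rw [if_neg h]
    unfold HomCond at h
    push_neg at h
    obtain ⟨i, j, a, b, hadj, ha, hb, hG⟩ := h
    unfold W
    apply Finset.prod_eq_zero (Finset.mem_univ i)
    apply Finset.prod_eq_zero (Finset.mem_univ j)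
    apply Finset.prod_eq_zero (Finset.mem_univ a)
    apply Finset.prod_eq_zero (Finset.mem_univ b)
    rw [if_pos ⟨hadj, ha, hb⟩]
    exact if_neg hG

lemma W_nonneg (t : Fin f → ℕ) (y : Fin f → Fin T → Fin n) : 0 ≤ W F G T t y := by
  rw [W_eq_indicator]; split <;> norm_num

noncomputable def padEquiv (t : Fin f → ℕ) (ht : ∀ j, t j ≤ T) :
    {y : Fin f → Fin T → Fin n // HomCond F G T t y} ≃
      {φ : ∀ j, Fin (t j) → Fin n // Hom' F G t φ} × (∀ j, Fin (T - t j) → Fin n) where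
  toFun y := (⟨fun j a => y.1 j ⟨a.1, lt_of_lt_of_le a.2 (ht j)⟩,
      fun i j a b hadj => y.2 i j _ _ hadj a.2 b.2⟩,
      fun j b => y.1 j ⟨t j + b.1, by have := b.2; omega⟩)
  invFun p := ⟨fun j c => if h : c.1 < t j then p.1.1 j ⟨c.1, h⟩
      else p.2 j ⟨c.1 - t j, by have := c.2; omega⟩,
      fun i j a b hadj ha hb => by
        have := p.1.2 i j ⟨a.1, ha⟩ ⟨b.1, hb⟩ hadj
        simpa [dif_pos ha, dif_pos hb] using this⟩
  left_inv y := by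
    apply Subtype.ext
    funext j c
    by_cases h : c.1 < t j
    · simp only [dif_pos h]
    · simp only [dif_neg h]
      exact congrArg (y.1 j) (Fin.ext (by simp; omega))
  right_inv p := by
    apply Prod.ext
    · apply Subtype.ext
      funext j a
      simp only [dif_pos a.2]
    · funext j b
      have h : ¬ (t j + b.1 < t j) := by omega
      simp only [dif_neg h]
      exact congrArg (p.2 j) (Fin.ext (by simp))

lemma card_pad (t : Fin f → ℕ) (ht : ∀ j, t j ≤ T) :
    Nat.card {y : Fin f → Fin T → Fin n // HomCond F G T t y}
      = Nat.card {φ : ∀ j, Fin (t j) → Fin n // Hom' F G t φ} * n ^ (∑ j, (T - t j)) := by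
  rw [Nat.card_congr (padEquiv F G t ht), Nat.card_prod]
  congr 1
  rw [Nat.card_pi]
  rw [← Finset.prod_pow_eq_pow_sum]
  apply Finset.prod_congr rfl
  intro j _
  rw [Nat.card_eq_fintype_card, Fintype.card_fun, Fintype.card_fin, Fintype.card_fin]

lemma sum_W_eq_card (t : Fin f → ℕ) (ht : ∀ j, t j ≤ T) :
    ∑ y : Fin f → Fin T → Fin n, W F G T t y
      = (Nat.card {φ : ∀ j, Fin (t j) → Fin n // Hom' F G t φ} : ℝ)
          * (n : ℝ) ^ (∑ j, (T - t j)) := by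
  have h1 : ∑ y : Fin f → Fin T → Fin n, W F G T t y
      = ((univ.filter (fun y : Fin f → Fin T → Fin n => HomCond F G T t y)).card : ℝ) := by
    rw [← Finset.sum_boole]
    exact Finset.sum_congr rfl fun y _ => W_eq_indicator F G t y
  rw [h1]
  have h2 : Nat.card {y : Fin f → Fin T → Fin n // HomCond F G T t y}
      = (univ.filter (fun y : Fin f → Fin T → Fin n => HomCond F G T t y)).card := by
    rw [Nat.card_eq_fintype_card, Fintype.card_subtype]
  rw [← h2, card_pad F G t ht]
  push_cast
  ring

def splitAt (i : Fin f) (β : Type*) : (Fin f → β) ≃ β × ({j : Fin f // j ≠ i} → β) where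
  toFun y := (y i, fun q => y q.1)
  invFun p j := if h : j = i then p.1 else p.2 ⟨j, h⟩
  left_inv y := funext fun j => by
    by_cases h : j = i
    · subst h; simp
    · simp [h]
  right_inv p := by
    refine Prod.ext (by simp) ?_
    funext q
    simp [q.2]

lemma splitAt_symm_self (i : Fin f) {β : Type*} (x : β) (r : {j : Fin f // j ≠ i} → β) :
    (splitAt i β).symm (x, r) i = x := by simp [splitAt]

lemma splitAt_symm_ne (i : Fin f) {β : Type*} (x : β) (r : {j : Fin f // j ≠ i} → β)
    (q : {j : Fin f // j ≠ i}) : (splitAt i β).symm (x, r) q.1 = r q := by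
  simp [splitAt, q.2]

lemma prod_split (i : Fin f) (g : Fin f → ℝ) :
    ∏ j, g j = g i * ∏ p : {j : Fin f // j ≠ i}, g p.1 := by
  rw [← Finset.mul_prod_erase univ g (mem_univ i)]
  congr 1
  exact Finset.prod_subtype _ (fun x => by simp) _

noncomputable def Qr (u : Fin f → ℕ) (i : Fin f)
    (r : {j : Fin f // j ≠ i} → Fin T → Fin n) : ℝ :=
  ∏ p, ∏ q, ∏ a : Fin T, ∏ b : Fin T,
    if F.Adj p.1 q.1 ∧ a.1 < u p.1 ∧ b.1 < u q.1 then A G (r p a) (r q b) else 1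

noncomputable def Rr (u : Fin f → ℕ) (i : Fin f)
    (r : {j : Fin f // j ≠ i} → Fin T → Fin n) (x : Fin n) : ℝ :=
  ∏ q, ∏ b : Fin T, if F.Adj i q.1 ∧ b.1 < u q.1 then A G x (r q b) else 1

lemma Qr01 (u : Fin f → ℕ) (i : Fin f) (r : {j : Fin f // j ≠ i} → Fin T → Fin n) :
    Qr F G u i r = 0 ∨ Qr F G u i r = 1 := by
  unfold Qr
  refine prod01 _ _ fun p _ => prod01 _ _ fun q _ => prod01 _ _ fun a _ => prod01 _ _ fun b _ => ?_
  split
  · exact A01 G _ _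
  · right; rfl

lemma Rr01 (u : Fin f → ℕ) (i : Fin f) (r : {j : Fin f // j ≠ i} → Fin T → Fin n) (x : Fin n) :
    Rr F G u i r x = 0 ∨ Rr F G u i r x = 1 := by
  unfold Rr
  refine prod01 _ _ fun q _ => prod01 _ _ fun b _ => ?_
  split
  · exact A01 G _ _
  · right; rfl

lemma W_split (u t' : Fin f → ℕ) (i : Fin f) (k : ℕ)
    (hti : t' i = k) (htj : ∀ j, j ≠ i → t' j = u j)
    (x : Fin T → Fin n) (r : {j : Fin f // j ≠ i} → Fin T → Fin n) :
    W F G T t' ((splitAt i (Fin T → Fin n)).symm (x, r))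
      = Qr F G u i r * ∏ a : Fin T, (if a.1 < k then Rr F G u i r (x a) else 1) := by
  set y := (splitAt i (Fin T → Fin n)).symm (x, r) with hy
  have hyi : y i = x := splitAt_symm_self i x r
  have hyq : ∀ q : {j : Fin f // j ≠ i}, y q.1 = r q := splitAt_symm_ne i x r
  have htq : ∀ q : {j : Fin f // j ≠ i}, t' q.1 = u q.1 := fun q => htj q.1 q.2
  set P : ℝ := ∏ a : Fin T, (if a.1 < k then Rr F G u i r (x a) else 1) with hP
  have hP01 : P = 0 ∨ P = 1 := by
    refine prod01 _ _ fun a _ => ?_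
    split
    · exact Rr01 F G u i r (x a)
    · right; rfl
  have block1 : (∏ a : Fin T, ∏ b : Fin T,
      if F.Adj i i ∧ a.1 < t' i ∧ b.1 < t' i then A G (y i a) (y i b) else 1) = 1 := by
    simp [SimpleGraph.irrefl]
  have block2 : (∏ q : {j : Fin f // j ≠ i}, ∏ a : Fin T, ∏ b : Fin T,
      if F.Adj i q.1 ∧ a.1 < t' i ∧ b.1 < t' q.1 then A G (y i a) (y q.1 b) else 1) = P := by
    rw [Finset.prod_comm]
    refine Finset.prod_congr rfl fun a _ => ?_
    by_cases h : a.1 < k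
    · rw [if_pos h]
      unfold Rr
      refine Finset.prod_congr rfl fun q _ => Finset.prod_congr rfl fun b _ => ?_
      rw [hyi, hyq q, hti, htq q]
      exact if_congr (by tauto) rfl rfl
    · rw [if_neg h]
      refine Finset.prod_eq_one fun q _ => Finset.prod_eq_one fun b _ => ?_
      rw [hti]
      exact if_neg (by tauto)
  have block3 : (∏ p : {j : Fin f // j ≠ i}, ∏ a : Fin T, ∏ b : Fin T,
      if F.Adj p.1 i ∧ a.1 < t' p.1 ∧ b.1 < t' i then A G (y p.1 a) (y i b) else 1) = P := by
    have step1 : (∏ p : {j : Fin f // j ≠ i}, ∏ a : Fin T, ∏ b : Fin T,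
        if F.Adj p.1 i ∧ a.1 < t' p.1 ∧ b.1 < t' i then A G (y p.1 a) (y i b) else 1)
        = ∏ b : Fin T, ∏ p : {j : Fin f // j ≠ i}, ∏ a : Fin T,
          if F.Adj p.1 i ∧ a.1 < t' p.1 ∧ b.1 < t' i then A G (y p.1 a) (y i b) else 1 := by
      rw [show (∏ p : {j : Fin f // j ≠ i}, ∏ a : Fin T, ∏ b : Fin T,
          if F.Adj p.1 i ∧ a.1 < t' p.1 ∧ b.1 < t' i then A G (y p.1 a) (y i b) else 1)
          = ∏ p : {j : Fin f // j ≠ i}, ∏ b : Fin T, ∏ a : Fin T,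
          if F.Adj p.1 i ∧ a.1 < t' p.1 ∧ b.1 < t' i then A G (y p.1 a) (y i b) else 1
        from Finset.prod_congr rfl (fun p _ => Finset.prod_comm)]
      exact Finset.prod_comm
    rw [step1]
    refine Finset.prod_congr rfl fun b _ => ?_
    by_cases h : b.1 < k
    · rw [if_pos h]
      unfold Rr
      refine Finset.prod_congr rfl fun p _ => Finset.prod_congr rfl fun a _ => ?_
      rw [hyi, hyq p, hti, htq p, A_symm G (r p a) (x b)]
      refine if_congr ⟨fun hh => ⟨hh.1.symm, hh.2.1⟩, fun hh => ⟨hh.1.symm, hh.2, h⟩⟩ rfl rfl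
    · rw [if_neg h]
      refine Finset.prod_eq_one fun p _ => Finset.prod_eq_one fun a _ => ?_
      rw [hti]
      exact if_neg (by tauto)
  have block4 : (∏ p : {j : Fin f // j ≠ i}, ∏ q : {j : Fin f // j ≠ i},
      ∏ a : Fin T, ∏ b : Fin T,
      if F.Adj p.1 q.1 ∧ a.1 < t' p.1 ∧ b.1 < t' q.1 then A G (y p.1 a) (y q.1 b) else 1)
      = Qr F G u i r := by
    unfold Qr
    refine Finset.prod_congr rfl fun p _ => Finset.prod_congr rfl fun q _ => ?_
    refine Finset.prod_congr rfl fun a _ => Finset.prod_congr rfl fun b _ => ?_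
    rw [hyq p, hyq q, htq p, htq q]
  unfold W
  rw [prod_split i (fun i' => ∏ j', ∏ a : Fin T, ∏ b : Fin T,
    if F.Adj i' j' ∧ a.1 < t' i' ∧ b.1 < t' j' then A G (y i' a) (y j' b) else 1)]
  rw [prod_split i (fun j' => ∏ a : Fin T, ∏ b : Fin T,
    if F.Adj i j' ∧ a.1 < t' i ∧ b.1 < t' j' then A G (y i a) (y j' b) else 1)]
  have inner : ∀ p : {j : Fin f // j ≠ i},
      (∏ j', ∏ a : Fin T, ∏ b : Fin T,
        if F.Adj p.1 j' ∧ a.1 < t' p.1 ∧ b.1 < t' j' then A G (y p.1 a) (y j' b) else 1)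
      = (∏ a : Fin T, ∏ b : Fin T,
          if F.Adj p.1 i ∧ a.1 < t' p.1 ∧ b.1 < t' i then A G (y p.1 a) (y i b) else 1)
        * ∏ q : {j : Fin f // j ≠ i}, ∏ a : Fin T, ∏ b : Fin T,
            if F.Adj p.1 q.1 ∧ a.1 < t' p.1 ∧ b.1 < t' q.1 then A G (y p.1 a) (y q.1 b) else 1 :=
    fun p => prod_split i _
  rw [Finset.prod_congr rfl (fun p _ => inner p), Finset.prod_mul_distrib]
  rw [block1, block2, block3, block4]
  rcases hP01 with h | h <;> rw [h] <;> ring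

lemma Rr_nonneg (u : Fin f → ℕ) (i : Fin f)
    (r : {j : Fin f // j ≠ i} → Fin T → Fin n) (x : Fin n) : 0 ≤ Rr F G u i r x := by
  rcases Rr01 F G u i r x with h | h <;> rw [h] <;> norm_num

lemma Qr_nonneg (u : Fin f → ℕ) (i : Fin f)
    (r : {j : Fin f // j ≠ i} → Fin T → Fin n) : 0 ≤ Qr F G u i r := by
  rcases Qr01 F G u i r with h | h <;> rw [h] <;> norm_num

lemma sum_P (k : ℕ) (hk : k ≤ T) (u : Fin f → ℕ) (i : Fin f)
    (r : {j : Fin f // j ≠ i} → Fin T → Fin n) :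
    ∑ x : Fin T → Fin n, ∏ a : Fin T, (if a.1 < k then Rr F G u i r (x a) else 1)
      = (∑ v, Rr F G u i r v) ^ k * (n : ℝ) ^ (T - k) := by
  have hps := Finset.prod_univ_sum (fun _ : Fin T => (univ : Finset (Fin n)))
    (fun a v => if a.1 < k then Rr F G u i r v else 1)
  rw [Fintype.piFinset_univ] at hps
  rw [← hps]
  have hinner : ∀ a : Fin T, (∑ v, if a.1 < k then Rr F G u i r v else 1)
      = if a.1 < k then (∑ v, Rr F G u i r v) else (n : ℝ) := by
    intro a
    by_cases h : a.1 < k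
    · simp [h]
    · simp [h]
  rw [Finset.prod_congr rfl (fun a _ => hinner a), Finset.prod_ite, Finset.prod_const,
    Finset.prod_const, card_filter_val_lt T k hk]
  have hcard2 : (univ.filter (fun a : Fin T => ¬ a.1 < k)).card = T - k := by
    have h2 := Finset.card_filter_add_card_filter_not
      (s := (univ : Finset (Fin T))) (p := fun a : Fin T => a.1 < k)
    rw [card_filter_val_lt T k hk, Finset.card_univ, Fintype.card_fin] at h2
    omega
  rw [hcard2]

lemma sum_W_split (u t' : Fin f → ℕ) (i : Fin f) (k : ℕ) (hk : k ≤ T)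
    (hti : t' i = k) (htj : ∀ j, j ≠ i → t' j = u j) :
    ∑ y : Fin f → Fin T → Fin n, W F G T t' y
      = (∑ r : {j : Fin f // j ≠ i} → Fin T → Fin n,
          Qr F G u i r * (∑ v, Rr F G u i r v) ^ k) * (n : ℝ) ^ (T - k) := by
  rw [← Equiv.sum_comp (splitAt i (Fin T → Fin n)).symm (W F G T t')]
  rw [Fintype.sum_prod_type, Finset.sum_comm, Finset.sum_mul]
  refine Finset.sum_congr rfl fun r _ => ?_
  rw [Finset.sum_congr rfl (fun x _ => W_split F G u t' i k hti htj x r),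
    ← Finset.mul_sum, sum_P F G k hk u i r]
  ring

lemma exp_id (Tn m fn : ℕ) (hm : 1 ≤ m) (hmT : m ≤ Tn) (hf : 1 ≤ fn) :
    Tn * (fn - 1) * (m - 1) + ((Tn - 1) * m + fn * Tn) = (Tn - m) + fn * Tn * m := by
  obtain ⟨m', rfl⟩ : ∃ m', m = m' + 1 := ⟨m - 1, by omega⟩
  obtain ⟨f', rfl⟩ : ∃ f', fn = f' + 1 := ⟨fn - 1, by omega⟩
  obtain ⟨T', rfl⟩ : ∃ T', Tn = T' + (m' + 1) := ⟨Tn - (m' + 1), by omega⟩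
  have e1 : T' + (m' + 1) - 1 = T' + m' := by omega
  have e2 : f' + 1 - 1 = f' := by omega
  have e3 : m' + 1 - 1 = m' := by omega
  have e4 : T' + (m' + 1) - (m' + 1) = T' := by omega
  rw [e1, e2, e3, e4]
  ring

lemma step_lemma (hn : 0 < n) (u : Fin f → ℕ) (i : Fin f) (m : ℕ)
    (hm : 1 ≤ m) (hmT : m ≤ T) (hT : 1 ≤ T) (hui : u i = 1) :
    ((∑ y : Fin f → Fin T → Fin n, W F G T u y) / (n : ℝ) ^ (f * T)) ^ m
      ≤ (∑ y : Fin f → Fin T → Fin n, W F G T (Function.update u i m) y)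
          / (n : ℝ) ^ (f * T) := by
  classical
  set N : ({j : Fin f // j ≠ i} → Fin T → Fin n) → ℝ :=
    fun r => ∑ v, Rr F G u i r v with hN
  set Q : ({j : Fin f // j ≠ i} → Fin T → Fin n) → ℝ :=
    fun r => Qr F G u i r with hQ
  have hQN_nonneg : ∀ r, 0 ≤ Q r * N r := fun r =>
    mul_nonneg (Qr_nonneg F G u i r) (Finset.sum_nonneg fun v _ => Rr_nonneg F G u i r v)
  have h1 : ∑ y : Fin f → Fin T → Fin n, W F G T u y
      = (∑ r, Q r * N r) * (n : ℝ) ^ (T - 1) := by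
    have := sum_W_split F G u u i 1 hT hui (fun j _ => rfl)
    simpa using this
  have h2 : ∑ y : Fin f → Fin T → Fin n, W F G T (Function.update u i m) y
      = (∑ r, Q r * N r ^ m) * (n : ℝ) ^ (T - m) := by
    exact sum_W_split F G u (Function.update u i m) i m hmT
      (Function.update_self i m u) (fun j hj => Function.update_of_ne hj m u)
  have hf1 : 1 ≤ f := i.pos
  -- cardinality of the rest-type
  have hcard : (Fintype.card ({j : Fin f // j ≠ i} → Fin T → Fin n) : ℝ)
      = (n : ℝ) ^ (T * (f - 1)) := by
    rw [Fintype.card_fun, Fintype.card_fun, Fintype.card_fin, Fintype.card_fin]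
    have : Fintype.card {j : Fin f // j ≠ i} = f - 1 := by
      rw [Fintype.card_subtype_compl, Fintype.card_subtype_eq, Fintype.card_fin]
    rw [this]
    push_cast
    rw [← pow_mul, mul_comm]
  -- Jensen
  have key : (∑ r, Q r * N r) ^ m ≤ (∑ r, Q r * N r ^ m) * (n : ℝ) ^ (T * (f - 1) * (m - 1)) := by
    have hpos : (0 : ℝ) < ((univ : Finset ({j : Fin f // j ≠ i} → Fin T → Fin n)).card : ℝ)
        ^ (m - 1) := by
      have : (0 : ℝ) < ((univ : Finset ({j : Fin f // j ≠ i} → Fin T → Fin n)).card : ℝ) := by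
        rw [Finset.card_univ]
        exact_mod_cast Fintype.card_pos_iff.mpr ⟨fun _ _ => Fin.mk 0 hn⟩
      positivity
    have hj := pow_sum_div_card_le_sum_pow
      (s := (univ : Finset ({j : Fin f // j ≠ i} → Fin T → Fin n)))
      (f := fun r => Q r * N r) (fun r _ => hQN_nonneg r) (m - 1)
    have hm1 : m - 1 + 1 = m := by omega
    rw [hm1, div_le_iff₀ hpos] at hj
    have hterm : ∀ r : {j : Fin f // j ≠ i} → Fin T → Fin n,
        (Q r * N r) ^ m = Q r * N r ^ m := by
      intro r
      rw [mul_pow]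
      rcases Qr01 F G u i r with h | h <;>
        simp only [hQ] <;> rw [h] <;> simp [zero_pow (by omega : m ≠ 0)]
    calc (∑ r, Q r * N r) ^ m
        ≤ (∑ r, (Q r * N r) ^ m)
            * ((univ : Finset ({j : Fin f // j ≠ i} → Fin T → Fin n)).card : ℝ) ^ (m - 1) := hj
      _ = (∑ r, Q r * N r ^ m) * (n : ℝ) ^ (T * (f - 1) * (m - 1)) := by
          rw [Finset.sum_congr rfl (fun r _ => hterm r), Finset.card_univ, hcard, ← pow_mul]
  -- final arithmetic
  have hD : (0 : ℝ) < (n : ℝ) ^ (f * T) := by positivity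
  rw [h1, h2, div_pow, div_le_div_iff₀ (by positivity) hD]
  calc ((∑ r, Q r * N r) * (n : ℝ) ^ (T - 1)) ^ m * (n : ℝ) ^ (f * T)
      = (∑ r, Q r * N r) ^ m * ((n : ℝ) ^ ((T - 1) * m) * (n : ℝ) ^ (f * T)) := by
        rw [mul_pow, ← pow_mul]; ring
    _ ≤ ((∑ r, Q r * N r ^ m) * (n : ℝ) ^ (T * (f - 1) * (m - 1)))
          * ((n : ℝ) ^ ((T - 1) * m) * (n : ℝ) ^ (f * T)) := by
        apply mul_le_mul_of_nonneg_right key (by positivity)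
    _ = (∑ r, Q r * N r ^ m) * (n : ℝ) ^ (T * (f - 1) * (m - 1) + ((T - 1) * m + f * T)) := by
        rw [pow_add, pow_add]; ring
    _ = (∑ r, Q r * N r ^ m) * (n : ℝ) ^ ((T - m) + f * T * m) := by
        rw [exp_id T m f hm hmT hf1]
    _ = (∑ r, Q r * N r ^ m) * (n : ℝ) ^ (T - m) * ((n : ℝ) ^ (f * T)) ^ m := by
        rw [pow_add, ← pow_mul]; ring

lemma main_induction (hn : 0 < n) (hT : 1 ≤ T) (t : Fin f → ℕ)
    (ht : ∀ i, 0 < t i) (htT : ∀ i, t i ≤ T) (s : Finset (Fin f)) :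
    ((∑ y : Fin f → Fin T → Fin n, W F G T (fun _ => 1) y) / (n : ℝ) ^ (f * T))
        ^ (∏ i ∈ s, t i)
      ≤ (∑ y : Fin f → Fin T → Fin n, W F G T (s.piecewise t (fun _ => 1)) y)
          / (n : ℝ) ^ (f * T) := by
  classical
  induction s using Finset.induction with
  | empty => simp [Finset.piecewise_empty]
  | @insert i s his ih =>
    rw [Finset.prod_insert his, pow_mul']
    have hE1 : 0 ≤ (∑ y : Fin f → Fin T → Fin n, W F G T (fun _ => 1) y)
        / (n : ℝ) ^ (f * T) :=
      div_nonneg (Finset.sum_nonneg fun y _ => W_nonneg F G _ y) (by positivity)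
    have h1 : (((∑ y : Fin f → Fin T → Fin n, W F G T (fun _ => 1) y)
          / (n : ℝ) ^ (f * T)) ^ (∏ i ∈ s, t i)) ^ (t i)
        ≤ ((∑ y : Fin f → Fin T → Fin n, W F G T (s.piecewise t (fun _ => 1)) y)
          / (n : ℝ) ^ (f * T)) ^ (t i) :=
      pow_le_pow_left₀ (pow_nonneg hE1 _) ih (t i)
    have hui : s.piecewise t (fun _ => 1) i = 1 := Finset.piecewise_eq_of_notMem _ _ _ his
    have h2 := step_lemma F G hn (s.piecewise t (fun _ => 1)) i (t i) (ht i) (htT i) hT hui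
    have h3 : Function.update (s.piecewise t (fun _ => 1)) i (t i)
        = (insert i s).piecewise t (fun _ => 1) := by
      funext j
      by_cases hj : j = i
      · subst hj
        rw [Function.update_self, Finset.piecewise_eq_of_mem _ _ _ (mem_insert_self j s)]
      · rw [Function.update_of_ne hj]
        by_cases hjs : j ∈ s
        · rw [Finset.piecewise_eq_of_mem _ _ _ hjs,
            Finset.piecewise_eq_of_mem _ _ _ (mem_insert_of_mem hjs)]
        · rw [Finset.piecewise_eq_of_notMem _ _ _ hjs,
            Finset.piecewise_eq_of_notMem _ _ _ (by simp [hj, hjs])]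
    rw [h3] at h2
    exact h1.trans h2

def equivOne :
    {φ : ∀ j : Fin f, Fin ((fun _ => 1 : Fin f → ℕ) j) → Fin n // Hom' F G (fun _ => 1) φ} ≃
      {φ : Fin f → Fin n // ∀ a b, F.Adj a b → G.Adj (φ a) (φ b)} where
  toFun ψ := ⟨fun j => ψ.1 j 0, fun a b h => ψ.2 a b 0 0 h⟩
  invFun φ := ⟨fun j _ => φ.1 j, fun i j a b h => φ.2 i j h⟩
  left_inv ψ := Subtype.ext (funext fun j => funext fun a =>
    congrArg (ψ.1 j) (Subsingleton.elim 0 a))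
  right_inv φ := rfl

def equivSigma (t : Fin f → ℕ) :
    {φ : ∀ j, Fin (t j) → Fin n // Hom' F G t φ} ≃
      {φ : (Σ i : Fin f, Fin (t i)) → Fin n //
        ∀ a b : Σ i : Fin f, Fin (t i), F.Adj a.1 b.1 → G.Adj (φ a) (φ b)} where
  toFun ψ := ⟨fun x => ψ.1 x.1 x.2, fun a b h => ψ.2 a.1 b.1 a.2 b.2 h⟩
  invFun φ := ⟨fun j a => φ.1 ⟨j, a⟩, fun i j a b h => φ.2 ⟨i, a⟩ ⟨j, b⟩ h⟩
  left_inv ψ := rfl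
  right_inv φ := Subtype.ext (funext fun x => by cases x; rfl)

end Core
end Stmt5Aux

open Stmt5Aux

/-- if the homomorphism density of F in G is p, then the homomorphism
density of the blow-up F⊗t in G is at least p^{t₁⋯t_f}. -/
theorem stmt5 (f n : ℕ) (F : SimpleGraph (Fin f)) (t : Fin f → ℕ) (ht : ∀ i, 0 < t i)
    (G : SimpleGraph (Fin n)) (p : ℝ)
    (hp : (Nat.card {φ : Fin f → Fin n //
        ∀ a b, F.Adj a b → G.Adj (φ a) (φ b)} : ℝ) / (n : ℝ) ^ f = p) :
    p ^ (∏ i, t i)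
      ≤ (Nat.card {φ : (Σ i : Fin f, Fin (t i)) → Fin n //
          ∀ a b : Σ i : Fin f, Fin (t i), F.Adj a.1 b.1 → G.Adj (φ a) (φ b)} : ℝ)
          / (n : ℝ) ^ (∑ i, t i) := by
  classical
  rcases Nat.eq_zero_or_pos n with hn | hn
  · subst hn
    rcases Nat.eq_zero_or_pos f with hf | hf
    · subst hf
      have h1 : (Nat.card {φ : Fin 0 → Fin 0 //
          ∀ a b, F.Adj a b → G.Adj (φ a) (φ b)}) = 1 := by
        rw [Nat.card_eq_one_iff_unique]
        constructor
        · constructor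
          intro a b
          apply Subtype.ext
          funext x
          exact absurd x.2 (by omega)
        · exact ⟨⟨fun x => absurd x.2 (by omega), fun a => absurd a.2 (by omega)⟩⟩
      have h2 : (Nat.card {φ : (Σ i : Fin 0, Fin (t i)) → Fin 0 //
          ∀ a b : Σ i : Fin 0, Fin (t i), F.Adj a.1 b.1 → G.Adj (φ a) (φ b)}) = 1 := by
        rw [Nat.card_eq_one_iff_unique]
        constructor
        · constructor
          intro a b
          apply Subtype.ext
          funext x
          exact x.1.elim0
        · exact ⟨⟨fun x => x.1.elim0, fun a b h => a.1.elim0⟩⟩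
      rw [h1] at hp
      rw [h2]
      simp at hp ⊢
      rw [← hp]
    · -- n = 0, f > 0 : both sides are 0
      have hzero : ((0 : ℕ) : ℝ) ^ f = 0 := by
        rw [Nat.cast_zero, zero_pow (by omega)]
      rw [hzero, div_zero] at hp
      have hsum : 0 < ∑ i, t i := by
        obtain ⟨i⟩ : Nonempty (Fin f) := ⟨⟨0, hf⟩⟩
        exact Finset.sum_pos' (fun j _ => Nat.zero_le _) ⟨i, mem_univ i, ht i⟩
      have hprod : 0 < ∏ i, t i := Finset.prod_pos fun i _ => ht i
      rw [Nat.cast_zero, zero_pow (by omega : ∑ i, t i ≠ 0), div_zero, ← hp,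
        zero_pow (by omega : ∏ i, t i ≠ 0)]
  · -- main case n > 0
    set T := (∑ i, t i) + 1 with hTdef
    have hT : 1 ≤ T := by omega
    have htT : ∀ i, t i ≤ T := fun i => by
      have : t i ≤ ∑ j, t j := Finset.single_le_sum (fun j _ => Nat.zero_le _) (mem_univ i)
      omega
    have hnR : (0 : ℝ) < (n : ℝ) := by exact_mod_cast hn
    -- E1 = p
    have hone : ∀ j : Fin f, (fun _ => 1 : Fin f → ℕ) j ≤ T := fun j => hT
    have hcard1 := sum_W_eq_card F G (T := T) (fun _ => 1) hone
    rw [Nat.card_congr (equivOne F G)] at hcard1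
    have hsum1 : (∑ j : Fin f, (T - (fun _ => 1 : Fin f → ℕ) j)) = f * (T - 1) := by
      rw [Finset.sum_const, card_univ, Fintype.card_fin, smul_eq_mul]
    rw [hsum1] at hcard1
    have hE1 : (∑ y : Fin f → Fin T → Fin n, W F G T (fun _ => 1) y) / (n : ℝ) ^ (f * T)
        = p := by
      have hT1 : T - 1 + 1 = T := by omega
      have hexp : f * (T - 1) + f = f * T := by
        calc f * (T - 1) + f = f * ((T - 1) + 1) := by ring
          _ = f * T := by rw [hT1]
      rw [hcard1, ← hp, div_eq_div_iff (by positivity) (by positivity), mul_assoc, ← pow_add,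
        hexp]
    -- final count
    have hcardt := sum_W_eq_card F G (T := T) t htT
    rw [Nat.card_congr (equivSigma F G t)] at hcardt
    have hmain := main_induction F G hn hT t ht htT univ
    rw [Finset.piecewise_univ, hE1] at hmain
    refine hmain.trans_eq ?_
    have hexp2 : (∑ j, (T - t j)) + ∑ i, t i = f * T := by
      calc (∑ j, (T - t j)) + ∑ i, t i = ∑ j, ((T - t j) + t j) := by
            rw [Finset.sum_add_distrib]
        _ = ∑ _j : Fin f, T := Finset.sum_congr rfl fun j _ => by have := htT j; omega
        _ = f * T := by rw [Finset.sum_const, card_univ, Fintype.card_fin, smul_eq_mul]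
    rw [hcardt, div_eq_div_iff (by positivity) (by positivity), mul_assoc, ← pow_add, hexp2]
end

section
/- Let X be an n-element set, let H be the graph on the power set of X where two subsets are adjacent iff they are disjoint, and let A be a family of subsets of X with |A| = m = 2^{(δ + 1/(k+1))n} for some δ > 0. Then the homomorphism density of the t-fold blow-up of the complete graph K_{k+1} in the induced subgraph H[A] is at most (k+1)·2^{-n(δt − 1)}. -/
/-!
Let `φ` be a homomorphism of the blow-up into the disjointness graph and let `S i` be the union
of the `t` sets in class `i`. The `S i` are pairwise disjoint, so some `S i` has at most
`n / (k+1)` elements. Hence `φ` is determined by the class `i` (`k+1` choices), by a `t`-tuple of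
subsets of a set of size at most `n / (k+1)` (at most `2^n · 2^(n t / (k+1))` choices) and by the
other `k t` vertices (`|A|^(k t)` choices). Dividing by `|A|^((k+1) t)` and inserting
`|A|^t = 2^((δ + 1/(k+1)) n t)` leaves `(k+1) · 2^(n - δ n t)`.
-/

open Finset Function

theorem card_filter_row_eq {ι κ β : Type*} [Fintype ι] [DecidableEq ι] [Fintype κ]
    [DecidableEq κ] [Fintype β] (i : ι) (P : (κ → β) → Prop) [DecidablePred P] :
    #{φ : ι × κ → β | P fun j => φ (i, j)} =
      #{g | P g} * Fintype.card β ^ ((Fintype.card ι - 1) * Fintype.card κ) := by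
  let e := (Equiv.curry ι κ β).trans (Equiv.piSplitAt i fun _ => κ → β)
  rw [← Fintype.card_subtype, ← Fintype.card_subtype,
    Fintype.card_congr (e.subtypeEquiv (p := fun φ => P fun j => φ (i, j))
      (q := fun x => P x.1) fun _ => Iff.rfl),
    Fintype.card_congr Equiv.prodSubtypeFstEquivSubtypeProd, Fintype.card_prod, Fintype.card_fun,
    Fintype.card_fun, Fintype.card_subtype_compl, Fintype.card_subtype_eq, ← pow_mul,
    mul_comm (Fintype.card κ)]

section
variable {α : Type*} [Fintype α] [DecidableEq α]

theorem card_filter_card_biUnion_le (κ : Type*) [Fintype κ] [DecidableEq κ] (s : ℕ) :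
    #{g : κ → Finset α | #(univ.biUnion g) ≤ s} ≤
      2 ^ Fintype.card α * 2 ^ (s * Fintype.card κ) := by
  have hcover : ({g : κ → Finset α | #(univ.biUnion g) ≤ s} : Finset _) ⊆
      ({S : Finset α | #S ≤ s} : Finset _).biUnion
        fun S => Fintype.piFinset fun _ => S.powerset := by
    intro g hg
    exact mem_biUnion.2 ⟨univ.biUnion g, mem_filter.2 ⟨mem_univ _, (mem_filter.1 hg).2⟩,
      Fintype.mem_piFinset.2 fun j => mem_powerset.2 (subset_biUnion_of_mem g (mem_univ j))⟩
  calc _ ≤ _ := card_le_card hcover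
    _ ≤ ∑ S ∈ {S : Finset α | #S ≤ s}, #(Fintype.piFinset fun _ : κ => S.powerset) :=
      card_biUnion_le
    _ ≤ ∑ _S ∈ {S : Finset α | #S ≤ s}, 2 ^ (s * Fintype.card κ) := by
      refine sum_le_sum fun S hS => ?_
      rw [Fintype.card_piFinset, prod_const, card_powerset, card_univ, ← pow_mul]
      exact Nat.pow_le_pow_right two_pos
        (Nat.mul_le_mul_right _ (mem_filter.1 hS).2)
    _ ≤ 2 ^ Fintype.card α * 2 ^ (s * Fintype.card κ) := by
      rw [sum_const, smul_eq_mul]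
      gcongr
      exact (card_filter_le _ _).trans (by simp)

theorem exists_card_mul_card_le_of_pairwise_disjoint {ι : Type*} [Fintype ι] [Nonempty ι]
    (S : ι → Finset α) (hS : Pairwise (Disjoint on S)) :
    ∃ i, Fintype.card ι * #(S i) ≤ Fintype.card α := by
  obtain ⟨i, -, hmin⟩ := exists_min_image univ (fun i => #(S i)) univ_nonempty
  refine ⟨i, ?_⟩
  calc Fintype.card ι * #(S i) ≤ ∑ j, #(S j) := by
        simpa using card_nsmul_le_sum univ (fun j => #(S j)) _ fun j _ => hmin j (mem_univ j)
    _ = #(univ.biUnion S) := (card_biUnion fun i _ j _ hij => hS hij).symm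
    _ ≤ Fintype.card α := card_le_univ _

theorem exists_row_mul_card_biUnion_le {ι κ : Type*} [Fintype ι] [Nonempty ι] [Fintype κ]
    (φ : ι × κ → Finset α) (hφ : ∀ u v, u.1 ≠ v.1 → Disjoint (φ u) (φ v)) :
    ∃ i, Fintype.card ι * #(univ.biUnion fun j => φ (i, j)) ≤ Fintype.card α :=
  exists_card_mul_card_le_of_pairwise_disjoint _ fun i i' hii' =>
    (disjoint_biUnion_left _ _ _).2 fun j _ => (disjoint_biUnion_right _ _ _).2 fun j' _ =>
      hφ (i, j) (i', j') hii'

theorem card_filter_forall_fst_ne_disjoint_le {ι κ : Type*} [Fintype ι] [DecidableEq ι]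
    [Nonempty ι] [Fintype κ] [DecidableEq κ] (A : Finset (Finset α)) :
    #{φ : ι × κ → A | ∀ u v, u.1 ≠ v.1 → Disjoint (φ u : Finset α) (φ v)} ≤
      Fintype.card ι * (2 ^ Fintype.card α *
        2 ^ (Fintype.card α / Fintype.card ι * Fintype.card κ) *
        #A ^ ((Fintype.card ι - 1) * Fintype.card κ)) := by
  set s := Fintype.card α / Fintype.card ι
  have hcover :
      ({φ : ι × κ → A | ∀ u v, u.1 ≠ v.1 → Disjoint (φ u : Finset α) (φ v)} : Finset _)
        ⊆ univ.biUnion fun i =>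
          {φ | #(univ.biUnion fun j => (φ (i, j) : Finset α)) ≤ s} := by
    intro φ hφ
    obtain ⟨i, hi⟩ :=
      exists_row_mul_card_biUnion_le (fun u => (φ u : Finset α)) (mem_filter.1 hφ).2
    exact mem_biUnion.2 ⟨i, mem_univ i, mem_filter.2 ⟨mem_univ φ,
      (Nat.le_div_iff_mul_le Fintype.card_pos).2 (by rwa [mul_comm])⟩⟩
  have hrow : #{g : κ → A | #(univ.biUnion fun j => (g j : Finset α)) ≤ s} ≤
      2 ^ Fintype.card α * 2 ^ (s * Fintype.card κ) := by
    refine le_trans ?_ (card_filter_card_biUnion_le κ s)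
    refine card_le_card_of_injOn (fun g j => (g j : Finset α)) (fun g hg => ?_) fun g _ g' _ h =>
      funext fun j => Subtype.ext (congrFun h j)
    simpa using hg
  calc _ ≤ _ := card_le_card hcover
    _ ≤ ∑ i, #{φ : ι × κ → A | #(univ.biUnion fun j => (φ (i, j) : Finset α)) ≤ s} :=
      card_biUnion_le
    _ ≤ ∑ _i : ι, 2 ^ Fintype.card α * 2 ^ (s * Fintype.card κ)
        * #A ^ ((Fintype.card ι - 1) * Fintype.card κ) := by
      refine sum_le_sum fun i _ => ?_
      rw [card_filter_row_eq i fun g : κ → A => #(univ.biUnion fun j => (g j : Finset α)) ≤ s,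
        Fintype.card_coe]
      exact Nat.mul_le_mul_right _ hrow
    _ = _ := by rw [sum_const, card_univ, smul_eq_mul]

end

theorem two_pow_mul_two_pow_div_le {n k t : ℕ} {δ m : ℝ}
    (hm : m = 2 ^ ((δ + 1 / ((k : ℝ) + 1)) * n)) :
    (2 : ℝ) ^ n * 2 ^ (n / (k + 1) * t) ≤ 2 ^ (-((n : ℝ) * (δ * t - 1))) * m ^ t := by
  rw [hm, ← Real.rpow_mul_natCast zero_le_two, ← Real.rpow_natCast 2 n,
    ← Real.rpow_natCast 2 (n / (k + 1) * t), ← Real.rpow_add two_pos, ← Real.rpow_add two_pos]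
  refine Real.rpow_le_rpow_of_exponent_le one_le_two ?_
  have hq : ((n / (k + 1) : ℕ) : ℝ) * t ≤ n / ((k : ℝ) + 1) * t :=
    mul_le_mul_of_nonneg_right (by exact_mod_cast Nat.cast_div_le) t.cast_nonneg
  have hsplit : (δ + 1 / ((k : ℝ) + 1)) * n * t = δ * n * t + n / ((k : ℝ) + 1) * t := by ring
  push_cast
  linarith

theorem stmt6_general (n k t : ℕ) (δ : ℝ) (A : Finset (Finset (Fin n)))
    (hm : (A.card : ℝ) = (2 : ℝ) ^ ((δ + 1 / ((k : ℝ) + 1)) * n)) :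
    (Nat.card {φ : Fin (k + 1) × Fin t → {x // x ∈ A} //
        ∀ u v : Fin (k + 1) × Fin t, u.1 ≠ v.1 →
          ((φ u : Finset (Fin n)) ≠ (φ v : Finset (Fin n)) ∧
            Disjoint (φ u : Finset (Fin n)) (φ v : Finset (Fin n)))} : ℝ)
        / (A.card : ℝ) ^ ((k + 1) * t)
      ≤ ((k : ℝ) + 1) * (2 : ℝ) ^ (-((n : ℝ) * (δ * t - 1))) := by
  have hA : (0 : ℝ) < #A := hm ▸ by positivity
  rw [div_le_iff₀ (by positivity)]
  calc _ ≤ ((k : ℝ) + 1) * (2 ^ n * 2 ^ (n / (k + 1) * t) * (#A : ℝ) ^ (k * t)) := by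
        rw [Nat.card_eq_fintype_card, Fintype.card_subtype]
        norm_cast
        refine (card_le_card <| monotone_filter_right _
          fun φ _ hφ u v huv => (hφ u v huv).2).trans ?_
        simpa using card_filter_forall_fst_ne_disjoint_le (ι := Fin (k + 1)) (κ := Fin t) A
    _ ≤ ((k : ℝ) + 1) * (2 ^ (-((n : ℝ) * (δ * t - 1))) * #A ^ t * #A ^ (k * t)) := by
        gcongr _ * (?_ * _)
        exact two_pow_mul_two_pow_div_le hm
    _ = _ := by ring

/-- homomorphism density of K_{k+1}⊗t in the induced disjointness
graph on A is at most (k+1)·2^{-n(δt−1)}, when |A| = 2^{(δ+1/(k+1))n}. -/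
theorem stmt6 (n k t : ℕ) (δ : ℝ) (hδ : 0 < δ) (A : Finset (Finset (Fin n)))
    (hm : (A.card : ℝ) = (2 : ℝ) ^ ((δ + 1 / ((k : ℝ) + 1)) * n)) :
    (Nat.card {φ : Fin (k + 1) × Fin t → {x // x ∈ A} //
        ∀ u v : Fin (k + 1) × Fin t, u.1 ≠ v.1 →
          ((φ u : Finset (Fin n)) ≠ (φ v : Finset (Fin n)) ∧
            Disjoint (φ u : Finset (Fin n)) (φ v : Finset (Fin n)))} : ℝ)
        / (A.card : ℝ) ^ ((k + 1) * t)
      ≤ ((k : ℝ) + 1) * (2 : ℝ) ^ (-((n : ℝ) * (δ * t - 1))) :=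
  stmt6_general n k t δ A hm
end

section
/- Let G be an n-vertex k-partite graph with e(G) ≥ (1 − 1/k − δ)·n²/2 edges, where 0 ≤ δ ≤ 1. Then there exists an induced subgraph G' of G with at least (1 − √δ)·n vertices and minimum degree at least (1 − 1/k − √δ)·(|V(G')| − 1). -/
open Finset

private def deg' {V : Type} [DecidableEq V] (G : SimpleGraph V) [DecidableRel G.Adj]
    (s : Finset V) (v : V) : ℕ :=
  (s.filter (fun u => G.Adj v u)).card

private def DD {V : Type} [DecidableEq V] (G : SimpleGraph V) [DecidableRel G.Adj]
    (s : Finset V) : ℕ :=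
  ∑ v ∈ s, deg' G s v

private lemma deg'_erase {V : Type} [DecidableEq V] (G : SimpleGraph V) [DecidableRel G.Adj]
    (s : Finset V) (v : V) : deg' G (s.erase v) v = deg' G s v := by
  unfold deg'
  rw [filter_erase, Finset.erase_eq_of_notMem]
  simp [G.irrefl]

private lemma DD_erase {V : Type} [DecidableEq V] (G : SimpleGraph V) [DecidableRel G.Adj]
    {s : Finset V} {v : V} (hv : v ∈ s) :
    DD G s = DD G (s.erase v) + 2 * deg' G s v := by
  have key : ∀ u ∈ s.erase v, deg' G s u = deg' G (s.erase v) u + (if G.Adj u v then 1 else 0) := by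
    intro u hu
    have hvs : s = insert v (s.erase v) := (Finset.insert_erase hv).symm
    unfold deg'
    conv_lhs => rw [hvs]
    rw [filter_insert]
    by_cases h : G.Adj u v
    · rw [if_pos h, card_insert_of_notMem (by simp)]; simp [h]
    · rw [if_neg h]; simp [h]
  have h1 : DD G s = ∑ u ∈ s.erase v, deg' G s u + deg' G s v := by
    rw [DD, Finset.sum_erase_add _ _ hv]
  have h2 : ∑ u ∈ s.erase v, deg' G s u
      = DD G (s.erase v) + ∑ u ∈ s.erase v, (if G.Adj u v then 1 else 0) := by
    rw [DD, ← Finset.sum_add_distrib]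
    exact Finset.sum_congr rfl key
  have h3 : ∑ u ∈ s.erase v, (if G.Adj u v then 1 else 0) = deg' G s v := by
    rw [← Finset.card_filter]
    have : (s.erase v).filter (fun u => G.Adj u v) = (s.erase v).filter (fun u => G.Adj v u) := by
      apply filter_congr; intro u _; simp [G.adj_comm]
    rw [this]
    exact deg'_erase G s v
  omega

private lemma DD_le {V : Type} [Fintype V] [DecidableEq V] (G : SimpleGraph V)
    [DecidableRel G.Adj] {k : ℕ} (P : V → Fin k)
    (hP : ∀ u v, G.Adj u v → P u ≠ P v) (s : Finset V) :
    (k : ℝ) * (DD G s : ℝ) ≤ ((k : ℝ) - 1) * (s.card : ℝ) ^ 2 := by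
  set a : Fin k → ℕ := fun i => (s.filter (fun v => P v = i)).card with ha
  have hsum : s.card = ∑ i, a i :=
    Finset.card_eq_sum_card_fiberwise (fun x _ => Finset.mem_univ _)
  -- degree bound
  have hdeg : ∀ v ∈ s, deg' G s v ≤ s.card - a (P v) := by
    intro v hv
    have hsub : s.filter (fun u => G.Adj v u) ⊆ s \ s.filter (fun u => P u = P v) := by
      intro u hu
      simp only [mem_filter, mem_sdiff] at hu ⊢
      exact ⟨hu.1, fun h => hP v u hu.2 h.2.symm⟩
    calc deg' G s v ≤ (s \ s.filter (fun u => P u = P v)).card := Finset.card_le_card hsub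
      _ = s.card - a (P v) := by rw [Finset.card_sdiff_of_subset (filter_subset _ _)]
  have hfib : ∑ v ∈ s, a (P v) = ∑ i, a i ^ 2 := by
    rw [← Finset.sum_fiberwise s P (fun v => a (P v))]
    apply Finset.sum_congr rfl
    intro i _
    rw [sq]
    have : ∀ v ∈ s.filter (fun v => P v = i), a (P v) = a i := by
      intro v hv; rw [(mem_filter.mp hv).2]
    rw [Finset.sum_congr rfl this, Finset.sum_const, smul_eq_mul]
  have hDD : DD G s + ∑ i, a i ^ 2 ≤ s.card * s.card := by
    have h1 : DD G s ≤ ∑ v ∈ s, (s.card - a (P v)) := Finset.sum_le_sum hdeg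
    have h2 : ∀ v ∈ s, a (P v) ≤ s.card := fun v _ =>
      Finset.card_le_card (filter_subset _ _)
    have h3 : ∑ v ∈ s, (s.card - a (P v)) + ∑ v ∈ s, a (P v) = ∑ v ∈ s, s.card := by
      rw [← Finset.sum_add_distrib]
      exact Finset.sum_congr rfl (fun v hv => Nat.sub_add_cancel (h2 v hv))
    have h4 : ∑ v ∈ s, (s.card : ℕ) = s.card * s.card := by
      rw [Finset.sum_const, smul_eq_mul]
    omega
  have hCS : (s.card : ℕ) ^ 2 ≤ k * ∑ i, a i ^ 2 := by
    calc (s.card : ℕ) ^ 2 = (∑ i, a i) ^ 2 := by rw [hsum]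
      _ ≤ (univ : Finset (Fin k)).card * ∑ i, a i ^ 2 := sq_sum_le_card_mul_sum_sq
      _ = k * ∑ i, a i ^ 2 := by rw [Finset.card_univ, Fintype.card_fin]
  have hDD' : (DD G s : ℝ) + (∑ i, a i ^ 2 : ℕ) ≤ (s.card : ℝ) ^ 2 := by
    have := hDD; push_cast; rw [sq]; exact_mod_cast by exact_mod_cast this
  have hCS' : ((s.card : ℝ)) ^ 2 ≤ (k : ℝ) * (∑ i, a i ^ 2 : ℕ) := by exact_mod_cast hCS
  nlinarith [Nat.cast_nonneg (α := ℝ) (DD G s), Nat.cast_nonneg (α := ℝ) (∑ i, a i ^ 2),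
    Nat.cast_nonneg (α := ℝ) k]
private lemma process {V : Type} [Fintype V] [DecidableEq V] (G : SimpleGraph V)
    [DecidableRel G.Adj] {k : ℕ} (P : V → Fin k)
    (hP : ∀ u v, G.Adj u v → P u ≠ P v) (c : ℝ) (hc : 0 ≤ c) (hk : 0 < k) :
    ∀ m : ℕ, ∀ s : Finset V, s.card ≤ m →
      ∃ t ⊆ s, (∀ v ∈ t, c * ((t.card : ℝ) - 1) ≤ (deg' G t v : ℝ)) ∧
        (t = s ∨ (DD G s : ℝ) < (1 - 1/(k:ℝ)) * (t.card : ℝ) ^ 2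
            + c * ((s.card : ℝ) ^ 2 - (t.card : ℝ) ^ 2)) := by
  intro m
  induction m with
  | zero =>
    intro s hs
    have : s = ∅ := Finset.card_eq_zero.mp (Nat.le_zero.mp hs)
    subst this
    exact ⟨∅, Finset.Subset.refl _, by simp, Or.inl rfl⟩
  | succ m ih =>
    intro s hs
    by_cases hall : ∀ v ∈ s, c * ((s.card : ℝ) - 1) ≤ (deg' G s v : ℝ)
    · exact ⟨s, Finset.Subset.refl _, hall, Or.inl rfl⟩
    · push_neg at hall
      obtain ⟨v, hv, hdeg⟩ := hall
      have hN : 1 ≤ s.card := Finset.card_pos.mpr ⟨v, hv⟩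
      have hcard' : (s.erase v).card = s.card - 1 := Finset.card_erase_of_mem hv
      have hle : (s.erase v).card ≤ m := by omega
      obtain ⟨t, hts, hmin, hdisj⟩ := ih (s.erase v) hle
      refine ⟨t, hts.trans (Finset.erase_subset _ _), hmin, Or.inr ?_⟩
      have hDDe : (DD G s : ℝ) = (DD G (s.erase v) : ℝ) + 2 * (deg' G s v : ℝ) := by
        exact_mod_cast congrArg (Nat.cast (R := ℝ)) (DD_erase G hv)
      have hcastc : ((s.erase v).card : ℝ) = (s.card : ℝ) - 1 := by
        rw [hcard']; push_cast [hN]; ring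
      have hT : (t.card : ℝ) ≤ (s.card : ℝ) - 1 := by
        rw [← hcastc]; exact_mod_cast Finset.card_le_card hts
      have hN1 : (1 : ℝ) ≤ (s.card : ℝ) := by exact_mod_cast hN
      have hk1 : (1 : ℝ) ≤ (k : ℝ) := by exact_mod_cast hk
      have hk0 : (0 : ℝ) < (k : ℝ) := by exact_mod_cast hk
      have hsq : (((s.erase v).card : ℝ))^2 = ((s.card : ℝ) - 1)^2 := by rw [hcastc]
      rcases hdisj with h | h
      · -- t = s.erase v : use k-partite bound on DD (s.erase v)
        have hA := DD_le G P hP (s.erase v)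
        have hA' : (DD G (s.erase v) : ℝ) ≤ (1 - 1/(k:ℝ)) * ((s.erase v).card : ℝ) ^ 2 := by
          have h1k : 1 - 1/(k:ℝ) = ((k:ℝ)-1)/(k:ℝ) := by field_simp
          rw [h1k, div_mul_eq_mul_div, le_div_iff₀ hk0]
          linarith [hA]
        subst h
        rw [hDDe]
        nlinarith [hdeg, hA', hc, hN1, hcastc, hsq, mul_nonneg hc (sub_nonneg.mpr hN1)]
      · -- strict case from IH
        rw [hDDe]
        nlinarith [hdeg, h, hcastc, hsq, hc, hN1, mul_nonneg hc (sub_nonneg.mpr hN1)]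
set_option maxHeartbeats 1000000 in
/-- a dense n-vertex k-partite graph has an induced subgraph on at
least (1−√δ)n vertices with minimum degree at least (1−1/k−√δ)(n'−1). -/
theorem stmt7 {V : Type} [Fintype V] [DecidableEq V] (G : SimpleGraph V)
    [DecidableRel G.Adj] (n k : ℕ) (hn : Fintype.card V = n)
    (δ : ℝ) (hδ0 : 0 ≤ δ) (hδ1 : δ ≤ 1)
    (P : V → Fin k) (hP : ∀ u v, G.Adj u v → P u ≠ P v)
    (he : (1 - 1 / (k : ℝ) - δ) * (n : ℝ) ^ 2 / 2 ≤ (G.edgeFinset.card : ℝ)) :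
    ∃ s : Finset V, (1 - Real.sqrt δ) * (n : ℝ) ≤ (s.card : ℝ) ∧
      ∀ v ∈ s, (1 - 1 / (k : ℝ) - Real.sqrt δ) * ((s.card : ℝ) - 1)
        ≤ ((s.filter (fun u => G.Adj v u)).card : ℝ) := by
  set r := Real.sqrt δ with hr
  have hr0 : 0 ≤ r := Real.sqrt_nonneg δ
  have hr1 : r ≤ 1 := Real.sqrt_le_one.mpr hδ1
  have hr2 : r ^ 2 = δ := Real.sq_sqrt hδ0
  by_cases hn0 : n = 0
  · subst hn0
    haveI : IsEmpty V := Fintype.card_eq_zero_iff.mp hn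
    refine ⟨∅, by simp, by simp⟩
  -- n ≥ 1, so V nonempty and k ≥ 1
  have hn1 : 1 ≤ n := Nat.one_le_iff_ne_zero.mpr hn0
  haveI : Nonempty V := Fintype.card_pos_iff.mp (by omega)
  obtain ⟨v₀⟩ := ‹Nonempty V›
  have hk : 0 < k := (P v₀).pos
  have huc : (((Finset.univ : Finset V)).card : ℝ) = (n : ℝ) := by
    rw [Finset.card_univ, hn]
  have hN1 : (1 : ℝ) ≤ (n : ℝ) := by exact_mod_cast hn1
  set c := 1 - 1/(k:ℝ) - r with hcdef
  by_cases hc : c < 0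
  · -- trivial: take everything
    refine ⟨Finset.univ, ?_, ?_⟩
    · rw [huc]; nlinarith
    · intro v _
      rw [huc]
      have : (0:ℝ) ≤ ((Finset.univ.filter (fun u => G.Adj v u)).card : ℝ) := by positivity
      nlinarith
  push_neg at hc
  obtain ⟨t, _, hmin, hdisj⟩ := process G P hP c hc hk n Finset.univ (by rw [Finset.card_univ, hn])
  have hDDuniv : DD G Finset.univ = 2 * G.edgeFinset.card := by
    rw [← SimpleGraph.sum_degrees_eq_twice_card_edges]
    apply Finset.sum_congr rfl
    intro v _
    rw [SimpleGraph.degree, SimpleGraph.neighborFinset_eq_filter]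
    rfl
  have hE : (1 - 1/(k:ℝ) - δ) * (n:ℝ)^2 ≤ (DD G Finset.univ : ℝ) := by
    rw [hDDuniv]; push_cast; linarith
  refine ⟨t, ?_, fun v hv => hmin v hv⟩
  rcases hdisj with h | h
  · rw [h, huc]; nlinarith
  · rw [huc] at h
    set T := (t.card : ℝ) with hT
    have hT0 : (0:ℝ) ≤ T := by positivity
    have key : r * ((n:ℝ)^2 - T^2) < r^2 * (n:ℝ)^2 := by
      rw [hr2]; rw [hcdef] at h; nlinarith [hE, h]
    by_contra hcon
    push_neg at hcon
    have hT2 : T^2 < ((1 - r) * (n:ℝ))^2 := by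
      have h1rn : (0:ℝ) ≤ (1 - r) * (n:ℝ) := mul_nonneg (by linarith) (by positivity)
      nlinarith [hcon, hT0]
    rcases eq_or_lt_of_le hr0 with h0 | hrpos
    · rw [← h0] at key; simp at key
    · have h1 : (2*r - r^2) * (n:ℝ)^2 < (n:ℝ)^2 - T^2 := by nlinarith [hT2]
      have h2 : r * ((2*r - r^2) * (n:ℝ)^2) < r * ((n:ℝ)^2 - T^2) :=
        mul_lt_mul_of_pos_left h1 hrpos
      have h3 : r * ((2*r - r^2) * (n:ℝ)^2) < r^2 * (n:ℝ)^2 := lt_trans h2 key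
      nlinarith [h3, mul_nonneg (mul_nonneg hr0 hr0)
        (mul_nonneg (sub_nonneg.mpr hr1) (sq_nonneg (n:ℝ)))]
end

section
/- Let G be a k-partite graph with vertex classes V_1,...,V_k, and let K_k(G) denote the number of k-cliques in G. Then e(G) ≥ (k choose 2) · K_k(G)^{2/k}. -/
/-!
Encode the cliques as the set `S` of tuples `f : Fin k → V` with `f i` in class `i` and all
`f i` pairwise adjacent, so that `K_k(G) ≤ |S|`. Since the classes of the endpoints recover the
pair `(i, j)`, the projections `π_{ij} S` of `S` to the coordinate pairs `i < j` are disjoint sets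
of edges, whence `∑_{i<j} |π_{ij} S| ≤ e(G)`. Shearer's inequality for pair projections,
`|S| ^ (k - 1) ≤ ∏_{i<j} |π_{ij} S|`, holds for any set of `k`-tuples: slice `S` along the last
coordinate, bound each slice by induction and by the product of its coordinate images, and sum
over the slices with Hölder's inequality. AM-GM over the `k.choose 2` pairs finishes the proof,
as `(k - 1) / k.choose 2 = 2 / k`.
-/

open Finset NNReal

theorem NNReal.pow_sum_le_prod_sum_of_pow_le_prod {α ι : Type*} {s : Finset α}
    {t : Finset ι} {x : α → ℝ≥0} {a : ι → α → ℝ≥0}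
    (h : ∀ v ∈ s, x v ^ #t ≤ ∏ i ∈ t, a i v) :
    (∑ v ∈ s, x v) ^ #t ≤ ∏ i ∈ t, ∑ v ∈ s, a i v := by
  set n := #t
  obtain hn | hn := eq_or_ne n 0
  · simp [hn, card_eq_zero.1 hn]
  set A : ι → ℝ≥0 := fun i => ∑ v ∈ s, a i v
  by_cases! hA : ∃ i ∈ t, A i = 0
  · obtain ⟨i, hi, hAi⟩ := hA
    suffices ∀ v ∈ s, x v = 0 by simp [sum_eq_zero this, hn]
    intro v hv
    have hprod : ∏ j ∈ t, a j v = 0 := prod_eq_zero hi (sum_eq_zero_iff.1 hAi v hv)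
    exact pow_eq_zero_iff hn |>.1 (le_zero_iff.1 (hprod ▸ h v hv))
  set w : ℝ≥0 := (n : ℝ≥0)⁻¹
  have hw : (w : ℝ) = (n : ℝ)⁻¹ := by simp [w]
  set M := (∏ i ∈ t, A i) ^ (n⁻¹ : ℝ) with hM
  -- Weighted AM-GM applied to the normalized values `a i v / A i`, which sum to `1` over `v`.
  have hv : ∀ v ∈ s, x v ≤ M * ∑ i ∈ t, w * (a i v / A i) := by
    intro v hv
    calc x v = (x v ^ n) ^ (n⁻¹ : ℝ) := (pow_rpow_inv_natCast _ hn).symm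
      _ ≤ (∏ i ∈ t, a i v) ^ (n⁻¹ : ℝ) := by gcongr; exact h v hv
      _ = M * ∏ i ∈ t, (a i v / A i) ^ (w : ℝ) := by
        rw [hw, hM, ← finsetProd_rpow, ← finsetProd_rpow, ← prod_mul_distrib]
        refine prod_congr rfl fun i hi => ?_
        rw [← mul_rpow, mul_div_cancel₀ _ (hA i hi)]
      _ ≤ _ := by
        gcongr
        exact geom_mean_le_arith_mean_weighted t (fun _ => w) _ (by simp [w, n, hn])
  have hsum : ∑ v ∈ s, x v ≤ M := by
    calc ∑ v ∈ s, x v ≤ ∑ v ∈ s, M * ∑ i ∈ t, w * (a i v / A i) := sum_le_sum hv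
      _ = M * ∑ i ∈ t, w * (A i / A i) := by
        rw [← mul_sum, sum_comm]
        simp_rw [← mul_sum, ← sum_div, A]
      _ = M := by
        rw [sum_congr rfl fun i hi => by rw [div_self (hA i hi)]]
        simp [w, n, hn]
  calc (∑ v ∈ s, x v) ^ n ≤ M ^ n := by gcongr
    _ = ∏ i ∈ t, A i := rpow_inv_natCast_pow _ hn

theorem Real.card_mul_rpow_div_card_le_sum_of_pow_le_prod {ι : Type*} (s : Finset ι)
    {z : ι → ℝ} (hz : ∀ i ∈ s, 0 ≤ z i) {x : ℝ} (hx : 0 ≤ x) {n : ℕ}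
    (h : x ^ n ≤ ∏ i ∈ s, z i) :
    #s * x ^ ((n : ℝ) / #s) ≤ ∑ i ∈ s, z i := by
  obtain rfl | hs := s.eq_empty_or_nonempty
  · simp
  have hcard : (0 : ℝ) < #s := by exact_mod_cast hs.card_pos
  have amgm := geom_mean_le_arith_mean s (fun _ => 1) z (fun _ _ => zero_le_one)
    (by simpa using hcard) hz
  simp only [rpow_one, sum_const, nsmul_eq_mul, mul_one, one_mul] at amgm
  rw [← le_div_iff₀' hcard, div_eq_mul_inv, rpow_mul hx, rpow_natCast]
  exact (rpow_le_rpow (by positivity) h (by positivity)).trans amgm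

theorem Fin.prod_filter_lt_succ {M : Type*} [CommMonoid M] (k : ℕ)
    (f : Fin (k + 1) × Fin (k + 1) → M) :
    ∏ p : Fin (k + 1) × Fin (k + 1) with p.1 < p.2, f p =
      (∏ p : Fin k × Fin k with p.1 < p.2, f (p.1.castSucc, p.2.castSucc)) *
        ∏ i : Fin k, f (i.castSucc, Fin.last k) := by
  simp only [prod_filter, Fintype.prod_prod_type, Fin.prod_univ_castSucc,
    Fin.castSucc_lt_castSucc_iff, Fin.castSucc_lt_last, (Fin.castSucc_lt_last _).not_gt,
    lt_irrefl, if_true, if_false, mul_one, prod_const_one, prod_mul_distrib]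

theorem Finset.card_le_prod_card_image_eval {ι α : Type*} [Fintype ι] [DecidableEq ι]
    [DecidableEq α] (S : Finset (ι → α)) : #S ≤ ∏ i, #(S.image fun f => f i) := by
  rw [← Fintype.card_piFinset]
  exact card_le_card fun f hf => Fintype.mem_piFinset.2 fun i => mem_image_of_mem _ hf

section Slicing

variable {α : Type*} [DecidableEq α] {k : ℕ}

def Finset.sliceLast (S : Finset (Fin (k + 1) → α)) (v : α) : Finset (Fin k → α) :=
  {f ∈ S | f (Fin.last k) = v}.image Fin.init

theorem Finset.card_eq_sum_card_sliceLast (S : Finset (Fin (k + 1) → α)) :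
    #S = ∑ v ∈ S.image (· (Fin.last k)), #(S.sliceLast v) := by
  rw [card_eq_sum_card_image (· (Fin.last k))]
  refine sum_congr rfl fun v _ => (card_image_of_injOn fun f hf g hg hfg => ?_).symm
  rw [← Fin.snoc_init_self f, ← Fin.snoc_init_self g, hfg, (mem_filter.1 hf).2,
    (mem_filter.1 hg).2]

theorem Finset.image_pair_sliceLast_subset (S : Finset (Fin (k + 1) → α)) (v : α)
    (i j : Fin k) :
    (S.sliceLast v).image (fun f => (f i, f j)) ⊆
      S.image fun f => (f i.castSucc, f j.castSucc) := by
  simp only [sliceLast, image_image]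
  exact image_subset_image (filter_subset _ _)

theorem Finset.sum_card_image_sliceLast_le (S : Finset (Fin (k + 1) → α)) (i : Fin k) :
    ∑ v ∈ S.image (· (Fin.last k)), #((S.sliceLast v).image (· i)) ≤
      #(S.image fun f => (f i.castSucc, f (Fin.last k))) := by
  rw [card_eq_sum_card_fiberwise (f := Prod.snd) (t := S.image (· (Fin.last k)))]
  · refine sum_le_sum fun v _ => ?_
    rw [← card_image_of_injective _ (Prod.mk_left_injective v)]
    refine card_le_card fun x hx => ?_
    simp only [sliceLast, image_image, mem_image, mem_filter, Function.comp] at hx ⊢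
    obtain ⟨f, ⟨hf, rfl⟩, rfl⟩ := hx
    exact ⟨⟨f, hf, rfl⟩, rfl⟩
  · intro x hx
    simp only [coe_image, Set.mem_image, mem_coe] at hx ⊢
    obtain ⟨f, hf, rfl⟩ := hx
    exact ⟨f, hf, rfl⟩

theorem Finset.card_pow_pred_le_prod_card_image_pair :
    ∀ {k : ℕ} (S : Finset (Fin k → α)),
      #S ^ (k - 1) ≤ ∏ p : Fin k × Fin k with p.1 < p.2, #(S.image fun f => (f p.1, f p.2))
  | 0, _ => by simp
  | k + 1, S => by
    rw [Fin.prod_filter_lt_succ, add_tsub_cancel_right]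
    obtain rfl | hk := eq_or_ne k 0
    · simp
    set L := S.image (· (Fin.last k))
    set Q := ∏ p : Fin k × Fin k with p.1 < p.2,
      #(S.image fun f => (f p.1.castSucc, f p.2.castSucc))
    -- Spread `Q` evenly over the `k` factors (`c ^ k = Q`) to put the slice bound in Hölder's form.
    set c : ℝ≥0 := (Q : ℝ≥0) ^ (k⁻¹ : ℝ) with hc
    have hslice : ∀ v ∈ L, (#(S.sliceLast v) : ℝ≥0) ^ #(univ : Finset (Fin k)) ≤
        ∏ i : Fin k, c * #((S.sliceLast v).image (· i)) := by
      intro v _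
      have hQ : #(S.sliceLast v) ^ (k - 1) ≤ Q :=
        (card_pow_pred_le_prod_card_image_pair _).trans <|
          prod_le_prod' fun p _ => card_le_card (image_pair_sliceLast_subset S v p.1 p.2)
      have hbox := card_le_prod_card_image_eval (S.sliceLast v)
      rw [prod_mul_distrib, prod_const, card_univ, Fintype.card_fin, hc,
        rpow_inv_natCast_pow _ hk]
      exact_mod_cast (pow_sub_one_mul hk _).symm.trans_le (Nat.mul_le_mul hQ hbox)
    have hHolder := pow_sum_le_prod_sum_of_pow_le_prod hslice
    rw [card_univ, Fintype.card_fin] at hHolder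
    suffices (#S : ℝ≥0) ^ k ≤
        Q * ∏ i : Fin k, (#(S.image fun f => (f i.castSucc, f (Fin.last k))) : ℝ≥0) by
      exact_mod_cast this
    calc (#S : ℝ≥0) ^ k = (∑ v ∈ L, (#(S.sliceLast v) : ℝ≥0)) ^ k := by
          rw [card_eq_sum_card_sliceLast, Nat.cast_sum]
      _ ≤ ∏ i : Fin k, ∑ v ∈ L, c * #((S.sliceLast v).image (· i)) := hHolder
      _ = Q * ∏ i : Fin k, ((∑ v ∈ L, #((S.sliceLast v).image (· i)) : ℕ) : ℝ≥0) := by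
        simp_rw [← mul_sum, prod_mul_distrib, prod_const, card_univ, Fintype.card_fin, hc,
          rpow_inv_natCast_pow _ hk, Nat.cast_sum]
      _ ≤ _ := by
        refine mul_le_mul_of_nonneg_left (prod_le_prod' fun i _ => ?_) zero_le
        exact_mod_cast sum_card_image_sliceLast_le S i

end Slicing

namespace SimpleGraph.Coloring

variable {V ι : Type*} [Fintype V] {G : SimpleGraph V} [DecidableRel G.Adj]

def cliqueTuples [DecidableEq V] [Fintype ι] [DecidableEq ι] (C : G.Coloring ι) :
    Finset (ι → V) :=
  {f | (∀ i, C (f i) = i) ∧ ∀ i j, i ≠ j → G.Adj (f i) (f j)}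

theorem card_cliqueFinset_le_card_cliqueTuples [DecidableEq V] [Fintype ι] [DecidableEq ι]
    (C : G.Coloring ι) :
    #(G.cliqueFinset (Fintype.card ι)) ≤ #C.cliqueTuples := by
  refine card_le_card_of_surjOn (fun f => univ.image f) fun s hs => ?_
  rw [coe_cliqueFinset, mem_cliqueSet_iff] at hs
  choose f hfs hfC using fun i => C.surjOn_of_card_le_isClique hs.isClique hs.card_eq.ge
    (Set.mem_univ i)
  refine ⟨f, ?_, ?_⟩
  · simp only [cliqueTuples, coe_filter, mem_univ, true_and]
    refine ⟨hfC, fun i j hij => hs.isClique (hfs i) (hfs j) fun h => hij ?_⟩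
    rw [← hfC i, ← hfC j, h]
  · refine (image_subset_iff.2 fun i _ => hfs i).antisymm fun v hv => mem_image.2
      ⟨C v, mem_univ _, ?_⟩
    by_contra hne
    exact C.valid (hs.isClique (hfs _) hv hne) (hfC _)

theorem card_adj_lt_le_card_edgeFinset [LinearOrder ι] (C : G.Coloring ι) :
    #{x : V × V | G.Adj x.1 x.2 ∧ C x.1 < C x.2} ≤ #G.edgeFinset := by
  refine card_le_card_of_injOn (fun x => s(x.1, x.2)) (fun x hx => ?_) fun x hx y hy hxy => ?_
  · simpa using (mem_filter.1 hx).2.1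
  · simp only [coe_filter, mem_univ, true_and, Set.mem_ofPred_eq] at hx hy
    rcases Sym2.eq_iff.1 hxy with ⟨h1, h2⟩ | ⟨h1, h2⟩
    · exact Prod.ext h1 h2
    · rw [h1, h2] at hx
      exact absurd hx.2 hy.2.not_gt

theorem sum_card_image_pair_cliqueTuples_le [DecidableEq V] [Fintype ι] [LinearOrder ι]
    (C : G.Coloring ι) :
    ∑ p : ι × ι with p.1 < p.2, #(C.cliqueTuples.image fun f => (f p.1, f p.2)) ≤
      #G.edgeFinset := by
  refine le_trans ?_ C.card_adj_lt_le_card_edgeFinset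
  rw [card_eq_sum_card_fiberwise (f := fun x => (C x.1, C x.2))
    (t := {p : ι × ι | p.1 < p.2}) fun x hx => by simpa using (mem_filter.1 hx).2.2]
  refine sum_le_sum fun p hp => card_le_card fun x hx => ?_
  obtain ⟨f, hf, rfl⟩ := mem_image.1 hx
  simp only [cliqueTuples, mem_filter, mem_univ, true_and] at hf hp
  simp [hf.1, hp, hf.2 _ _ hp.ne]

end SimpleGraph.Coloring

/-- a k-partite graph G satisfies e(G) ≥ C(k,2)·K_k(G)^{2/k}. -/
theorem stmt8 {V : Type} [Fintype V] [DecidableEq V] (k : ℕ) (G : SimpleGraph V)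
    [DecidableRel G.Adj] (P : V → Fin k) (hP : ∀ u v, G.Adj u v → P u ≠ P v) :
    (k.choose 2 : ℝ) * ((G.cliqueFinset k).card : ℝ) ^ ((2 : ℝ) / (k : ℝ))
      ≤ (G.edgeFinset.card : ℝ) := by
  obtain hk | hk := lt_or_ge k 2
  · simp [Nat.choose_eq_zero_of_lt hk]
  let C : G.Coloring (Fin k) := .mk P (hP _ _)
  have hcliques := C.card_cliqueFinset_le_card_cliqueTuples
  have hshearer := card_pow_pred_le_prod_card_image_pair C.cliqueTuples
  have hedges := C.sum_card_image_pair_cliqueTuples_le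
  rw [Fintype.card_fin] at hcliques
  have hpow : ((#(G.cliqueFinset k) : ℕ) : ℝ) ^ (k - 1) ≤
      ∏ p : Fin k × Fin k with p.1 < p.2,
        (#(C.cliqueTuples.image fun f => (f p.1, f p.2)) : ℝ) := by
    exact_mod_cast (Nat.pow_le_pow_left hcliques _).trans hshearer
  have hamgm := Real.card_mul_rpow_div_card_le_sum_of_pow_le_prod _
    (fun _ _ => Nat.cast_nonneg _) (Nat.cast_nonneg _) hpow
  have hexp : ((k - 1 : ℕ) : ℝ) / (k.choose 2 : ℕ) = 2 / k := by
    have hk1 : (k : ℝ) - 1 ≠ 0 := by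
      rw [sub_ne_zero, Nat.cast_ne_one]; omega
    rw [Nat.cast_choose_two, Nat.cast_pred (by omega)]
    field_simp
  rw [Fintype.card_product_filter_lt, Fintype.card_fin, hexp] at hamgm
  exact hamgm.trans (by exact_mod_cast hedges)
end

section
/- Let r ≤ k and let G be a K_{k+1}-free graph on n vertices. Then the number of r-cliques of G is at most the number of r-cliques of the k-partite Turán graph T_k(n). -/
/-!
Induction on the number of vertices. A `K_{k+1}`-free graph on `n` vertices has a vertex `v` of
degree at most `n - 1 - ⌊(n - 1) / k⌋`, the minimum degree of `T_k(n)`. The `r`-cliques avoiding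
`v` are at most those of `T_k(n - 1)` by induction, and those through `v` correspond to the
`(r - 1)`-cliques of the `K_k`-free neighbourhood of `v`, which are at most those of
`T_{k-1}(n - 1 - ⌊(n - 1) / k⌋)`. Splitting the cliques of `T_k(n)` in the same way at a vertex
of a largest part shows that these two bounds add up to at most the `r`-cliques of `T_k(n)`.
-/

open Finset

namespace Nat

theorem add_div_add_one_mod_succ {x k : ℕ} (hk : 0 < k) :
    (x + x / k + 1) % (k + 1) = x % k + 1 := by
  have hx : x + x / k + 1 = (x % k + 1) + (k + 1) * (x / k) := by
    have := Nat.mod_add_div x k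
    linarith
  rw [hx, Nat.add_mul_mod_self_left, Nat.mod_eq_of_lt (by have := Nat.mod_lt x hk; omega)]

theorem add_div_lt_of_lt_sub_div {x n k : ℕ} (hx : x < n - n / (k + 1)) : x + x / k < n := by
  rcases k.eq_zero_or_pos with rfl | hk
  · simp at hx
  set p := n / (k + 1)
  have hn : n < (k + 1) * (p + 1) := Nat.lt_mul_div_succ n k.succ_pos
  have hxp : x / k ≤ p := by
    have : x + p < n := by omega
    rw [← Nat.lt_succ_iff, Nat.div_lt_iff_lt_mul hk]
    nlinarith
  omega

end Nat

namespace SimpleGraph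

variable {α β : Type*} {G : SimpleGraph α}

theorem isContained_induce_of_injective {H : SimpleGraph β} {s : Set β}
    (f : α → β) (hf : Function.Injective f) (hs : ∀ a, f a ∈ s)
    (hadj : ∀ a b, G.Adj a b → H.Adj (f a) (f b)) : G ⊑ H.induce s :=
  ⟨⟨⟨fun a => ⟨f a, hs a⟩, fun h => hadj _ _ h⟩, fun _ _ h => hf (congrArg Subtype.val h)⟩⟩

theorem CliqueFree.induce_neighborSet {k : ℕ} (hG : G.CliqueFree (k + 1)) (v : α) :
    (G.induce (G.neighborSet v)).CliqueFree k := by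
  rw [cliqueFree_induce_iff]
  simpa using CliqueFreeOn.of_succ _ hG.cliqueFreeOn (Set.mem_univ v)

section Counting

variable [DecidableEq α] [DecidableRel G.Adj]

theorem CliqueFreeOn.card_le_mul {k c : ℕ} {s : Finset α} (hs : G.CliqueFreeOn s (k + 1))
    (hc : ∀ v ∈ s, #s ≤ #{w ∈ s | G.Adj v w} + c) : #s ≤ k * c := by
  induction k generalizing s with
  | zero =>
    rw [zero_mul, Nat.le_zero, card_eq_zero, ← not_nonempty_iff_eq_empty]
    rintro ⟨v, hv⟩
    exact hs (by simpa using hv) (isNClique_one.2 ⟨v, rfl⟩)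
  | succ k ih =>
    obtain rfl | ⟨v, hv⟩ := s.eq_empty_or_nonempty
    · simp
    set t := {w ∈ s | G.Adj v w}
    have hts : t ⊆ s := filter_subset _ _
    have ht : G.CliqueFreeOn t (k + 1) :=
      .subset _ (fun w hw => by simpa [t] using hw) (.of_succ _ hs (mem_coe.2 hv))
    -- A vertex of `t` misses no more vertices of `t` than of `s` (inclusion–exclusion in `s`).
    have hct : ∀ u ∈ t, #t ≤ #{w ∈ t | G.Adj u w} + c := by
      intro u hu
      have hinter : t ∩ {w ∈ s | G.Adj u w} = {w ∈ t | G.Adj u w} := by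
        rw [inter_filter, inter_eq_left.2 hts]
      have hunion := card_union_add_card_inter t {w ∈ s | G.Adj u w}
      rw [hinter] at hunion
      have hle : #(t ∪ {w ∈ s | G.Adj u w}) ≤ #s :=
        card_le_card (union_subset hts (filter_subset _ s))
      have := hc u (hts hu)
      omega
    calc #s ≤ #t + c := hc v hv
      _ ≤ k * c + c := by gcongr; exact ih ht hct
      _ = (k + 1) * c := by ring

variable [Fintype α]

theorem CliqueFree.exists_degree_le [Nonempty α] {k : ℕ} (hG : G.CliqueFree (k + 1)) :
    ∃ v, G.degree v ≤ Fintype.card α - 1 - (Fintype.card α - 1) / k := by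
  by_contra! h
  have hc : ∀ v ∈ (univ : Finset α),
      #(univ : Finset α) ≤ #{w ∈ univ | G.Adj v w} + (Fintype.card α - 1) / k := by
    intro v _
    rw [card_univ, ← G.neighborFinset_eq_filter, G.card_neighborFinset_eq_degree]
    have := h v
    omega
  have := hG.cliqueFreeOn.card_le_mul hc
  have := Nat.mul_div_le (Fintype.card α - 1) k
  have := Fintype.card_pos (α := α)
  rw [card_univ] at *
  omega

theorem IsContained.card_cliqueFinset_le [Fintype β] [DecidableEq β] {H : SimpleGraph β}
    [DecidableRel H.Adj] (h : G ⊑ H) (n : ℕ) : #(G.cliqueFinset n) ≤ #(H.cliqueFinset n) := by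
  obtain ⟨f⟩ := h
  have hle : G.map f.toEmbedding ≤ H := by
    rw [map_le_iff_le_comap]
    exact f.toHom.le_comap
  refine card_le_card_of_injOn (Finset.map f.toEmbedding) (fun s hs => ?_)
    (Finset.map_injective _).injOn
  simp only [coe_cliqueFinset, mem_cliqueSet_iff] at hs ⊢
  exact hs.map.mono hle

theorem card_cliqueFinset_zero : #(G.cliqueFinset 0) = 1 := by
  rw [card_eq_one]
  exact ⟨∅, by ext; simp [isNClique_zero]⟩

theorem card_cliqueFinset_induce (s : Set α) [DecidablePred (· ∈ s)] (n : ℕ) :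
    #((G.induce s).cliqueFinset n) = #{t ∈ G.cliqueFinset n | ∀ w ∈ t, w ∈ s} := by
  rw [← card_map ⟨Finset.map (.subtype (· ∈ s)), Finset.map_injective _⟩]
  congr 1
  ext t
  simp only [mem_map, mem_cliqueFinset_iff, isNClique_induce_iff, mem_filter,
    Function.Embedding.coeFn_mk]
  constructor
  · rintro ⟨u, hu, rfl⟩
    exact ⟨hu, fun w hw => map_subtype_subset u hw⟩
  · rintro ⟨ht, hts⟩
    refine ⟨t.subtype (· ∈ s), ?_⟩
    rw [subtype_map_of_mem hts]
    exact ⟨ht, rfl⟩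

theorem card_filter_mem_cliqueFinset_succ (v : α) (n : ℕ) :
    #{t ∈ G.cliqueFinset (n + 1) | v ∈ t} =
      #{u ∈ G.cliqueFinset n | ∀ w ∈ u, w ∈ G.neighborSet v} := by
  refine card_nbij' (·.erase v) (insert v) (fun t ht => ?_) (fun u hu => ?_)
    (fun t ht => insert_erase (mem_filter.1 ht).2) (fun u hu => erase_insert fun hv => ?_)
  · simp only [coe_filter, mem_cliqueFinset_iff, Set.mem_ofPred_eq] at ht ⊢
    refine ⟨ht.1.erase_of_mem ht.2, fun w hw => ?_⟩
    exact ht.1.isClique ht.2 (mem_of_mem_erase hw) (ne_of_mem_erase hw).symm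
  · simp only [coe_filter, mem_cliqueFinset_iff, Set.mem_ofPred_eq] at hu ⊢
    exact ⟨hu.1.insert fun w hw => hu.2 w hw, mem_insert_self v u⟩
  · simp only [coe_filter, mem_cliqueFinset_iff, Set.mem_ofPred_eq] at hu
    exact G.irrefl (hu.2 v hv)

theorem card_cliqueFinset_succ (v : α) (n : ℕ) :
    #(G.cliqueFinset (n + 1)) =
      #((G.induce {v}ᶜ).cliqueFinset (n + 1)) + #((G.induce (G.neighborSet v)).cliqueFinset n) := by
  rw [card_cliqueFinset_induce, card_cliqueFinset_induce, ← card_filter_mem_cliqueFinset_succ,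
    ← card_filter_add_card_filter_not (s := G.cliqueFinset (n + 1)) (p := (v ∈ ·)), add_comm]
  simp only [Set.mem_compl_iff, Set.mem_singleton_iff, forall_mem_not_eq']

end Counting

theorem turanGraph_isContained_of_le {m n k : ℕ} (h : m ≤ n) : turanGraph m k ⊑ turanGraph n k :=
  Embedding.isContained ⟨Fin.castLEEmb h, by simp [turanGraph_adj]⟩

theorem turanGraph_isContained_induce_compl_zero (n k : ℕ) :
    turanGraph n k ⊑ (turanGraph (n + 1) k).induce {0}ᶜ :=
  isContained_induce_of_injective Fin.succ (Fin.succ_injective n) Fin.succ_ne_zero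
    fun _ _ hadj hmod => hadj (Nat.ModEq.add_right_cancel' 1 hmod)

/-- The neighbours of `0` in `turanGraph (n + 1) (k + 1)` are the non-multiples of `k + 1`, and
`x ↦ x + x / k + 1` enumerates them in increasing order, moving the class of `x` modulo `k` to
the class `x % k + 1` modulo `k + 1`. -/
theorem turanGraph_isContained_induce_neighborSet_zero (n k : ℕ) :
    turanGraph (n - n / (k + 1)) k ⊑
      (turanGraph (n + 1) (k + 1)).induce ((turanGraph (n + 1) (k + 1)).neighborSet 0) := by
  rcases k.eq_zero_or_pos with rfl | hk
  · rw [zero_add, Nat.div_one, Nat.sub_self]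
    exact .of_isEmpty
  refine isContained_induce_of_injective
    (fun x => ⟨x + x / k + 1, by have := Nat.add_div_lt_of_lt_sub_div x.2; omega⟩)
    (StrictMono.injective fun x y hxy => ?_) (fun x => ?_) (fun x y hadj => ?_)
  · have := Nat.div_le_div_right (c := k) (Fin.lt_def.1 hxy).le
    rw [Fin.mk_lt_mk]
    omega
  · simp [turanGraph_adj, Nat.add_div_add_one_mod_succ hk]
  · simpa [turanGraph_adj, Nat.add_div_add_one_mod_succ hk] using hadj

theorem card_cliqueFinset_turanGraph_add_le (n k r : ℕ) :
    #((turanGraph n (k + 1)).cliqueFinset (r + 1)) +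
        #((turanGraph (n - n / (k + 1)) k).cliqueFinset r) ≤
      #((turanGraph (n + 1) (k + 1)).cliqueFinset (r + 1)) := by
  rw [card_cliqueFinset_succ (G := turanGraph (n + 1) (k + 1)) 0]
  exact add_le_add ((turanGraph_isContained_induce_compl_zero n _).card_cliqueFinset_le _)
    ((turanGraph_isContained_induce_neighborSet_zero n k).card_cliqueFinset_le _)

theorem CliqueFree.card_cliqueFinset_le_turanGraph [Fintype α] [DecidableEq α]
    [DecidableRel G.Adj] {k : ℕ} (hG : G.CliqueFree (k + 1)) (r : ℕ) :
    #(G.cliqueFinset r) ≤ #((turanGraph (Fintype.card α) k).cliqueFinset r) := by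
  induction hN : Fintype.card α using Nat.strong_induction_on generalizing α k r with
  | _ N ih =>
    rcases r with _ | r
    · rw [card_cliqueFinset_zero, card_cliqueFinset_zero]
    cases isEmpty_or_nonempty α
    · rw [cliqueFinset_eq_empty_iff.2 (cliqueFree_of_card_lt (G := G) (by simp)), card_empty]
      exact Nat.zero_le _
    rcases k with _ | k
    · exact absurd (cliqueFree_one.1 hG) (not_isEmpty_of_nonempty α)
    obtain ⟨v, hv⟩ := hG.exists_degree_le
    obtain ⟨N, rfl⟩ : ∃ m, N = m + 1 := Nat.exists_eq_add_one.2 (hN ▸ Fintype.card_pos)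
    rw [hN, Nat.add_sub_cancel] at hv
    calc #(G.cliqueFinset (r + 1))
        = #((G.induce {v}ᶜ).cliqueFinset (r + 1)) +
            #((G.induce (G.neighborSet v)).cliqueFinset r) := card_cliqueFinset_succ v r
      _ ≤ #((turanGraph N (k + 1)).cliqueFinset (r + 1)) +
            #((turanGraph (G.degree v) k).cliqueFinset r) := by
        gcongr
        · exact ih N (by omega) (hG.comap (Embedding.induce _).isContained) (r + 1)
            (by rw [Fintype.card_compl_set, Set.card_singleton, hN, Nat.add_sub_cancel])
        · have := G.degree_lt_card_verts v
          exact ih _ (by omega) (hG.induce_neighborSet v) r (card_neighborSet_eq_degree G v)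
      _ ≤ #((turanGraph N (k + 1)).cliqueFinset (r + 1)) +
            #((turanGraph (N - N / (k + 1)) k).cliqueFinset r) := by
        gcongr
        exact (turanGraph_isContained_of_le hv).card_cliqueFinset_le r
      _ ≤ #((turanGraph (N + 1) (k + 1)).cliqueFinset (r + 1)) :=
        card_cliqueFinset_turanGraph_add_le N k r

end SimpleGraph

theorem stmt11_general {V : Type} [Fintype V] [DecidableEq V] (n r k : ℕ)
    (hn : Fintype.card V = n) (G : SimpleGraph V) [DecidableRel G.Adj]
    (hfree : G.CliqueFree (k + 1)) :
    (G.cliqueFinset r).card ≤ ((SimpleGraph.turanGraph n k).cliqueFinset r).card :=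
  hn ▸ hfree.card_cliqueFinset_le_turanGraph r

/-- Erdős: a K_{k+1}-free graph on n vertices has at most as many
r-cliques as the Turán graph T_k(n), for r ≤ k. -/
theorem stmt11 {V : Type} [Fintype V] [DecidableEq V] (n r k : ℕ) (hrk : r ≤ k)
    (hn : Fintype.card V = n) (G : SimpleGraph V) [DecidableRel G.Adj]
    (hfree : G.CliqueFree (k + 1)) :
    (G.cliqueFinset r).card ≤ ((SimpleGraph.turanGraph n k).cliqueFinset r).card :=
  stmt11_general n r k hn G hfree
end

section
/- Let X be an n-element set with n = 2l+1 odd, and suppose G is a 2-generator for X with |G| ≤ 3·2^l − 2. Then the number of edges of the disjointness graph H restricted to G satisfies e(H[G]) ≥ 2^{2l+1} − |G| − 1, and consequently the edge density of H[G] exceeds 4/9. -/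
/-!
Every subset of `X` other than `∅` and the members of `G` is `A ∪ B` for an edge `{A, B}` of
`H[G]`, and distinct subsets come from distinct edges, so `2 ^ n ≤ e(H[G]) + |G| + 1`.
Since `x ↦ (the generating subfamily of x)` is injective into the powerset of `G`, also `n ≤ |G|`.
For `n = 2l + 1` and `|G| ≤ 3 · 2 ^ l - 2`, comparing `2 ^ (2l+1) - |G| - 1` with `4/9 · C(|G|, 2)`
is then a quadratic inequality in `|G|`.
-/

open Finset

variable {α : Type*} [DecidableEq α]

def IsTwoGenerator (G : Finset (Finset α)) : Prop :=
  ∀ x : Finset α, ∃ S ⊆ G, #S ≤ 2 ∧ (S : Set (Finset α)).PairwiseDisjoint id ∧ x = S.sup id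

abbrev disjointGraph (α : Type*) : SimpleGraph (Finset α) :=
  SimpleGraph.fromRel fun x y : Finset α => Disjoint x y

namespace IsTwoGenerator

variable {G : Finset (Finset α)}

theorem card_le [Fintype α] (hG : IsTwoGenerator G) : Fintype.card α ≤ #G := by
  choose S hSG _ _ hS using hG
  have hinj : Function.Injective S := fun x y hxy => by rw [hS x, hS y, hxy]
  have : Fintype.card (Finset α) ≤ #G.powerset :=
    card_le_card_of_injOn S (fun x _ => mem_powerset.2 (hSG x)) hinj.injOn
  rw [Fintype.card_finset, card_powerset] at this
  exact (Nat.pow_le_pow_iff_right one_lt_two).1 this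

theorem exists_disjoint_union (hG : IsTwoGenerator G) {x : Finset α} (hx₀ : x ≠ ∅)
    (hxG : x ∉ G) : ∃ A ∈ G, ∃ B ∈ G, A ≠ B ∧ Disjoint A B ∧ A ∪ B = x := by
  obtain ⟨S, hSG, hS2, hSdisj, rfl⟩ := hG x
  interval_cases hS : #S
  · exact absurd (by rw [card_eq_zero.1 hS]; rfl) hx₀
  · obtain ⟨A, rfl⟩ := card_eq_one.1 hS
    exact absurd (by simpa using hSG) hxG
  · obtain ⟨A, B, hAB, rfl⟩ := card_eq_two.1 hS
    refine ⟨A, hSG (by simp), B, hSG (by simp), hAB, hSdisj (by simp) (by simp) hAB, ?_⟩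
    simp

theorem subset_image_edgeSet (hG : IsTwoGenerator G) :
    (↑(insert ∅ G))ᶜ ⊆ (fun e => (e.map Subtype.val).sup) ''
      ((disjointGraph α).induce (G : Set (Finset α))).edgeSet := by
  intro x hx
  simp only [coe_insert, Set.mem_compl_iff, Set.mem_insert_iff, mem_coe, not_or] at hx
  obtain ⟨A, hA, B, hB, hAB, hdisj, rfl⟩ := hG.exists_disjoint_union hx.1 hx.2
  exact ⟨s(⟨A, hA⟩, ⟨B, hB⟩), (SimpleGraph.fromRel_adj _ _ _).2 ⟨hAB, .inl hdisj⟩, rfl⟩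

theorem two_pow_card_le [Fintype α] (hG : IsTwoGenerator G) :
    2 ^ Fintype.card α ≤
      Nat.card ((disjointGraph α).induce (G : Set (Finset α))).edgeSet + #G + 1 := by
  set E := ((disjointGraph α).induce (G : Set (Finset α))).edgeSet
  calc 2 ^ Fintype.card α = (Set.univ : Set (Finset α)).ncard := by
        rw [Set.ncard_univ, Nat.card_eq_fintype_card, Fintype.card_finset]
    _ ≤ (↑(insert ∅ G) : Set (Finset α)).ncard
          + ((fun e => (e.map Subtype.val).sup) '' E).ncard := by
        rw [← Set.union_compl_self (↑(insert ∅ G) : Set (Finset α))]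
        exact (Set.ncard_union_le _ _).trans
          (add_le_add le_rfl (Set.ncard_le_ncard hG.subset_image_edgeSet (Set.toFinite _)))
    _ ≤ #G + 1 + E.ncard := by
        rw [Set.ncard_coe_finset]
        exact add_le_add (card_insert_le _ _) (Set.ncard_image_le (Set.toFinite _))
    _ = Nat.card E + #G + 1 := by rw [Nat.card_coe_set_eq]; ring

end IsTwoGenerator

/-- The gap is decreasing in `m ≥ 0`, and at `m = 3t - 2` it equals `(t - 1) / 3`. -/
theorem four_ninths_mul_choose_lt {m t : ℝ} (ht : 1 < t) (hm₀ : 0 ≤ m) (hm : m ≤ 3 * t - 2) :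
    4 / 9 * (m * (m - 1) / 2) < 2 * t ^ 2 - m - 1 := by
  nlinarith [sq_nonneg (m - (3 * t - 2))]

/-- for n = 2l+1 odd and G a 2-generator with |G| ≤ 3·2^l − 2,
the induced disjointness graph H[G] has at least 2^{2l+1} − |G| − 1 edges, and
edge density exceeding 4/9. -/
theorem stmt13 (l : ℕ) (hl : 1 ≤ l) (n : ℕ) (hn : n = 2 * l + 1)
    (G : Finset (Finset (Fin n)))
    (hgen : ∀ x : Finset (Fin n), ∃ S ⊆ G, S.card ≤ 2 ∧
      (S : Set (Finset (Fin n))).PairwiseDisjoint id ∧ x = S.sup id)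
    (hcard : G.card ≤ 3 * 2 ^ l - 2) :
    (2 : ℝ) ^ (2 * l + 1) - (G.card : ℝ) - 1
      ≤ (Nat.card ((SimpleGraph.fromRel
          (fun x y : Finset (Fin n) => Disjoint x y)).induce
            (↑G : Set (Finset (Fin n)))).edgeSet : ℝ) ∧
    (4 / 9 : ℝ)
      < (Nat.card ((SimpleGraph.fromRel
          (fun x y : Finset (Fin n) => Disjoint x y)).induce
            (↑G : Set (Finset (Fin n)))).edgeSet : ℝ) / (G.card.choose 2 : ℝ) := by
  subst hn
  have hG : IsTwoGenerator G := hgen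
  set e := Nat.card ((disjointGraph (Fin (2 * l + 1))).induce (G : Set (Finset _))).edgeSet
  have hedges : 2 ^ (2 * l + 1) ≤ e + #G + 1 := by
    simpa only [Fintype.card_fin] using hG.two_pow_card_le
  have hGn : 2 * l + 1 ≤ #G := by simpa only [Fintype.card_fin] using hG.card_le
  have hlower : (2 : ℝ) ^ (2 * l + 1) - #G - 1 ≤ e := by
    have : (2 : ℝ) ^ (2 * l + 1) ≤ e + #G + 1 := by exact_mod_cast hedges
    linarith
  refine ⟨hlower, ?_⟩
  have ht : (1 : ℝ) < 2 ^ l := one_lt_pow₀ one_lt_two (by omega)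
  have hGt : (#G : ℝ) ≤ 3 * 2 ^ l - 2 := by
    have h2 : 2 ≤ 3 * 2 ^ l := by have := Nat.one_le_two_pow (n := l); omega
    have := (Nat.cast_le (α := ℝ)).2 hcard
    rwa [Nat.cast_sub h2, Nat.cast_mul, Nat.cast_pow] at this
  have hchoose : (0 : ℝ) < (#G).choose 2 := mod_cast Nat.choose_pos (by omega)
  rw [lt_div_iff₀ hchoose, Nat.cast_choose_two]
  calc 4 / 9 * (#G * (#G - 1) / 2 : ℝ) < 2 * (2 ^ l) ^ 2 - #G - 1 :=
        four_ninths_mul_choose_lt ht (Nat.cast_nonneg _) hGt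
    _ = 2 ^ (2 * l + 1) - #G - 1 := by ring
    _ ≤ e := hlower
end
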